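/- arXiv:1906.07784 — 7 statements merged into one kernel-verified Lean document; each statement's English description precedes it below -/
import Mathlib

section
/- Let (N,ν) be a measure space, 1 < p < ∞, γ > 0, and u ∈ L^p(N). Then ∫_N exp_{⌈p-2⌉}(γ|u|^{p'}) dν ≤ ∫_{{|u|≥1}} e^{γ|u|^{p'}} dν + e^γ ‖u‖_p^p, where p' = p/(p-1) and exp_m(t) = e^t − Σ_{k=0}^m t^k/k!. -/
/-!
Split `N` at the level set `{|u| ≥ 1}`. There `exp_m ≤ exp` suffices. Where `|u| < 1`, put
`a = |u|^{p'} ≤ 1`: every term of the tail series `exp_m(γ a) = Σ_{k > m} (γ a)^k / k!` carries a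
factor `a^k ≤ a^{m+1}`, so `exp_m(γ a) ≤ a^{m+1} e^γ`, and `m = ⌈p-2⌉` is exactly large enough
that `p' (m+1) ≥ p`, i.e. `a^{m+1} ≤ |u|^p`.
-/

open MeasureTheory ENNReal

noncomputable def expReg (m : ℕ) (t : ℝ) : ℝ :=
  Real.exp t - ∑ k ∈ Finset.range (m + 1), t ^ k / (Nat.factorial k)

lemma expReg_eq_tsum (m : ℕ) (x : ℝ) :
    expReg m x = ∑' k : ℕ, x ^ (k + (m + 1)) / (k + (m + 1)).factorial := by
  rw [expReg, Real.exp_eq_exp_ℝ, NormedSpace.exp_eq_tsum_div]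
  beta_reduce
  rw [← (Real.summable_pow_div_factorial x).sum_add_tsum_nat_add (m + 1)]
  ring

lemma expReg_nonneg (m : ℕ) {x : ℝ} (hx : 0 ≤ x) : 0 ≤ expReg m x := by
  rw [expReg_eq_tsum]
  exact tsum_nonneg fun k => by positivity

lemma expReg_le_exp (m : ℕ) {x : ℝ} (hx : 0 ≤ x) : expReg m x ≤ Real.exp x := by
  rw [expReg, sub_le_self_iff]
  exact Finset.sum_nonneg fun k _ => by positivity

lemma expReg_mul_le_pow_mul (m : ℕ) {a γ : ℝ} (ha : 0 ≤ a) (ha1 : a ≤ 1) (hγ : 0 ≤ γ) :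
    expReg m (γ * a) ≤ a ^ (m + 1) * expReg m γ := by
  have hinj := add_left_injective (m + 1)
  rw [expReg_eq_tsum, expReg_eq_tsum, ← tsum_mul_left]
  refine ((Real.summable_pow_div_factorial _).comp_injective hinj).tsum_le_tsum (fun k => ?_)
    (((Real.summable_pow_div_factorial γ).comp_injective hinj).mul_left _)
  rw [mul_pow, mul_comm (γ ^ _), mul_div_assoc]
  exact mul_le_mul_of_nonneg_right (pow_le_pow_of_le_one ha ha1 (by omega)) (by positivity)

lemma le_div_sub_one_mul_ceil_sub_two_add_one {p : ℝ} (hp : 1 < p) :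
    p ≤ p / (p - 1) * (⌈p - 2⌉₊ + 1) := by
  have hp1 : 0 < p - 1 := by linarith
  calc p = p / (p - 1) * (p - 1) := by field_simp
    _ ≤ p / (p - 1) * (⌈p - 2⌉₊ + 1) := by
      gcongr
      linarith [Nat.le_ceil (p - 2)]

lemma expReg_ceil_le_exp_mul_rpow {p γ y : ℝ} (hp : 1 < p) (hγ : 0 ≤ γ) (hy : 0 ≤ y)
    (hy1 : y ≤ 1) :
    expReg ⌈p - 2⌉₊ (γ * y ^ (p / (p - 1))) ≤ Real.exp γ * y ^ p := by
  have hp' : 0 ≤ p / (p - 1) := div_nonneg (by linarith) (by linarith)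
  have hpow : (y ^ (p / (p - 1))) ^ (⌈p - 2⌉₊ + 1) ≤ y ^ p := by
    rw [← Real.rpow_mul_natCast hy]
    push_cast
    exact Real.rpow_le_rpow_of_exponent_ge' hy hy1 (by linarith)
      (le_div_sub_one_mul_ceil_sub_two_add_one hp)
  calc expReg ⌈p - 2⌉₊ (γ * y ^ (p / (p - 1)))
      ≤ (y ^ (p / (p - 1))) ^ (⌈p - 2⌉₊ + 1) * expReg ⌈p - 2⌉₊ γ :=
        expReg_mul_le_pow_mul _ (by positivity) (Real.rpow_le_one hy hy1 hp') hγ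
    _ ≤ y ^ p * Real.exp γ := by
        gcongr
        exacts [expReg_nonneg _ hγ, expReg_le_exp _ hγ]
    _ = Real.exp γ * y ^ p := mul_comm _ _

lemma lintegral_le_setLIntegral_add_lintegral {α : Type*} [MeasurableSpace α] {μ : Measure α}
    {f g h : α → ℝ≥0∞} {s : Set α} (hh : AEMeasurable h μ) (hfg : ∀ x ∈ s, f x ≤ g x)
    (hfh : ∀ x ∉ s, f x ≤ h x) :
    ∫⁻ x, f x ∂μ ≤ ∫⁻ x in s, g x ∂μ + ∫⁻ x, h x ∂μ := by
  have hf : ∀ x, f x ≤ s.indicator g x + h x := fun x => by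
    by_cases hx : x ∈ s
    · simpa [hx] using le_add_right (hfg x hx)
    · simpa [hx] using hfh x hx
  calc ∫⁻ x, f x ∂μ ≤ ∫⁻ x, (s.indicator g x + h x) ∂μ := lintegral_mono hf
    _ = ∫⁻ x, s.indicator g x ∂μ + ∫⁻ x, h x ∂μ := lintegral_add_right' _ hh
    _ ≤ ∫⁻ x in s, g x ∂μ + ∫⁻ x, h x ∂μ := add_le_add_left (lintegral_indicator_le g s) _

/-- Exponential Regularization Lemma, upper bound:
`∫_N exp_{⌈p-2⌉}(γ|u|^{p'}) dν ≤ ∫_{|u|≥1} e^{γ|u|^{p'}} dν + e^γ ‖u‖_p^p`. -/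
theorem stmt_2 {N : Type*} [MeasurableSpace N] (ν : Measure N) (p γ : ℝ)
    (hp : 1 < p) (hγ : 0 < γ) (u : N → ℝ)
    (hu : MemLp u (ENNReal.ofReal p) ν) :
    (∫⁻ x, ENNReal.ofReal (expReg ⌈p - 2⌉₊ (γ * |u x| ^ (p / (p - 1)))) ∂ν)
      ≤ (∫⁻ x in {x | 1 ≤ |u x|},
            ENNReal.ofReal (Real.exp (γ * |u x| ^ (p / (p - 1)))) ∂ν)
        + ENNReal.ofReal (Real.exp γ) * ∫⁻ x, ENNReal.ofReal (|u x| ^ p) ∂ν := by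
  have hmeas : AEMeasurable (fun x => ENNReal.ofReal (Real.exp γ) * ENNReal.ofReal (|u x| ^ p)) ν :=
    (hu.1.aemeasurable.norm.pow_const p).ennreal_ofReal.const_mul _
  rw [← lintegral_const_mul' _ _ ofReal_ne_top]
  refine lintegral_le_setLIntegral_add_lintegral hmeas (fun x _ => ?_) (fun x hx => ?_)
  · exact ofReal_le_ofReal (expReg_le_exp _ (by positivity))
  · rw [← ofReal_mul (Real.exp_nonneg γ)]
    exact ofReal_le_ofReal (expReg_ceil_le_exp_mul_rpow hp hγ.le (abs_nonneg _)
      (le_of_lt (not_le.mp hx)))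
end

section
/- Let Ω ⊆ ℝ^n be measurable, 0 < α < n, and for x ∈ Ω let Λ_Ω(x,r) = |Ω ∩ B(x,r)| and let k*(x,·) be the nonincreasing rearrangement of y ↦ |x−y|^{α−n} over Ω. If λ(1) := sup_{x∈Ω} |Ω ∩ B(x,1)| (essentially), then ∫_{λ(1)}^∞ (k*(x,t))^{n/(n−α)} dt ≤ n ∫_1^∞ Λ_Ω(x,r) r^{−n−1} dr for a.e. x ∈ Ω. -/
/-!
`k*(x, ·)` is the generalised inverse of the distribution function
`s ↦ |{y ∈ Ω : |x - y|^{α-n} > s}| ≤ Λ_Ω(x, s^{-1/(n-α)})`, so by the layer-cake formula, with `p = n/(n-α)`,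
`∫_{t₀}^∞ k*^p = p ∫_0^∞ |{t > t₀ : k*(t) > s}| s^{p-1} ds ≤ p ∫_0^∞ (Λ_Ω(x, s^{-1/(n-α)}) - t₀)⁺ s^{p-1} ds`.
Substituting `s = r^{α-n}` turns this into `n ∫_0^∞ (Λ_Ω(x,r) - t₀)⁺ r^{-n-1} dr`.
For almost every `x ∈ Ω` and `r ≤ 1` we have `Λ_Ω(x,r) ≤ Λ_Ω(x,1) ≤ λ(1) = t₀`, so only `r > 1` contributes.
-/

open MeasureTheory Set Metric ENNReal Filter Topology Module

theorem lintegral_comp_rpow_Ioi (g : ℝ → ℝ≥0∞) {c : ℝ} (hc : c ≠ 0) :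
    ∫⁻ r in Ioi 0, ENNReal.ofReal (|c| * r ^ (c - 1)) * g (r ^ c) = ∫⁻ s in Ioi 0, g s := by
  have himage : (· ^ c) '' Ioi 0 = Ioi (0 : ℝ) := by
    ext s
    refine ⟨?_, fun hs => ⟨s ^ c⁻¹, Real.rpow_pos_of_pos hs _, Real.rpow_inv_rpow (le_of_lt hs) hc⟩⟩
    rintro ⟨r, hr, rfl⟩
    exact Real.rpow_pos_of_pos hr c
  conv_rhs => rw [← himage]
  rw [lintegral_image_eq_lintegral_abs_deriv_mul measurableSet_Ioi
    (fun r hr => (Real.hasDerivAt_rpow_const (Or.inl (mem_Ioi.mp hr).ne')).hasDerivWithinAt)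
    ((Real.rpow_left_injOn hc).mono fun r (hr : (0 : ℝ) < r) => hr.le) g]
  refine setLIntegral_congr_fun measurableSet_Ioi fun r (hr : 0 < r) => ?_
  rw [abs_mul, abs_of_nonneg (Real.rpow_nonneg hr.le _)]

theorem lintegral_Ioi_comp_rpow_inv_mul_rpow (g : ℝ → ℝ≥0∞) {c p : ℝ} (hc : c ≠ 0) (hp : 0 ≤ p) :
    ENNReal.ofReal p * ∫⁻ s in Ioi 0, g (s ^ c⁻¹) * ENNReal.ofReal (s ^ (p - 1)) =
      ENNReal.ofReal (|c| * p) * ∫⁻ r in Ioi 0, g r * ENNReal.ofReal (r ^ (c * p - 1)) := by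
  rw [← lintegral_comp_rpow_Ioi _ hc, ← lintegral_const_mul' _ _ ofReal_ne_top,
    ← lintegral_const_mul' _ _ ofReal_ne_top]
  refine setLIntegral_congr_fun measurableSet_Ioi fun r hr => ?_
  have hr : 0 < r := hr
  have hweight : p * (|c| * r ^ (c - 1)) * (r ^ c) ^ (p - 1) = |c| * p * r ^ (c * p - 1) := by
    rw [← Real.rpow_mul hr.le, show p * (|c| * r ^ (c - 1)) * r ^ (c * (p - 1)) =
      |c| * p * (r ^ (c - 1) * r ^ (c * (p - 1))) by ring, ← Real.rpow_add hr]
    ring_nf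
  calc ENNReal.ofReal p * (ENNReal.ofReal (|c| * r ^ (c - 1)) *
        (g ((r ^ c) ^ c⁻¹) * ENNReal.ofReal ((r ^ c) ^ (p - 1))))
      = g r * ENNReal.ofReal (p * (|c| * r ^ (c - 1)) * (r ^ c) ^ (p - 1)) := by
        rw [Real.rpow_rpow_inv hr.le hc, ENNReal.ofReal_mul (p := p * _) (by positivity),
          ENNReal.ofReal_mul hp]
        ring
    _ = _ := by
        rw [hweight, ENNReal.ofReal_mul (by positivity)]
        ring

theorem volume_Ioi_inter_setOf_ofReal_lt_le {a : ℝ} (ha : 0 ≤ a) (M : ℝ≥0∞) :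
    volume (Ioi a ∩ {t | ENNReal.ofReal t < M}) ≤ M - ENNReal.ofReal a := by
  rcases eq_or_ne M ∞ with rfl | hM
  · simp
  calc volume (Ioi a ∩ {t | ENNReal.ofReal t < M})
      ≤ volume (Ioo a M.toReal) := measure_mono fun t ⟨hat, htM⟩ =>
        ⟨hat, (ENNReal.ofReal_lt_iff_lt_toReal (ha.trans hat.le) hM).mp htM⟩
    _ = M - ENNReal.ofReal a := by
        rw [Real.volume_Ioo, ENNReal.ofReal_sub _ ha, ENNReal.ofReal_toReal hM]

theorem setLIntegral_Ioi_zero_tsub_mul_le {L w : ℝ → ℝ≥0∞} {T : ℝ≥0∞}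
    (hL : ∀ r ∈ Ioc 0 1, L r ≤ T) :
    ∫⁻ r in Ioi 0, (L r - T) * w r ≤ ∫⁻ r in Ioi 1, L r * w r := by
  rw [← Ioc_union_Ioi_eq_Ioi zero_le_one]
  refine (lintegral_union_le _ _ _).trans ?_
  rw [setLIntegral_congr_fun measurableSet_Ioc fun r hr => by
      rw [tsub_eq_zero_of_le (hL r hr), zero_mul],
    lintegral_zero, zero_add]
  exact setLIntegral_mono' measurableSet_Ioi fun r _ => by gcongr; exact tsub_le_self

/-- The nonincreasing rearrangement `k*` of a function with distribution function `D`. -/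
noncomputable def rearrangement (D : ℝ → ℝ≥0∞) (t : ℝ) : ℝ :=
  sInf {s : ℝ | 0 < s ∧ D s ≤ ENNReal.ofReal t}

namespace rearrangement

variable {D : ℝ → ℝ≥0∞}

theorem nonneg (D : ℝ → ℝ≥0∞) (t : ℝ) : 0 ≤ rearrangement D t :=
  Real.sInf_nonneg fun _ hs => hs.1.le

theorem bddBelow_setOf (D : ℝ → ℝ≥0∞) (t : ℝ) :
    BddBelow {s : ℝ | 0 < s ∧ D s ≤ ENNReal.ofReal t} :=
  ⟨0, fun _ hs => hs.1.le⟩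

theorem ofReal_lt_of_lt {t u : ℝ} (hu : 0 < u) (h : u < rearrangement D t) :
    ENNReal.ofReal t < D u := by
  by_contra! hle
  exact (csInf_le (bddBelow_setOf D t) ⟨hu, hle⟩).not_gt h

theorem antitoneOn (hD : ∀ t > 0, ∃ s > 0, D s ≤ ENNReal.ofReal t) :
    AntitoneOn (rearrangement D) (Ioi 0) := fun t₁ ht₁ _ _ h =>
  csInf_le_csInf (bddBelow_setOf D _) (hD t₁ ht₁)
    fun _ hs => ⟨hs.1, hs.2.trans (ENNReal.ofReal_le_ofReal h)⟩

theorem lintegral_rpow_le (hD : ∀ t > 0, ∃ s > 0, D s ≤ ENNReal.ofReal t)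
    {M : ℝ → ℝ≥0∞} (hM : ∀ s > 0, D s ≤ M s) {t₀ p : ℝ} (ht₀ : 0 ≤ t₀) (hp : 0 < p) :
    ∫⁻ t in Ioi t₀, ENNReal.ofReal (rearrangement D t ^ p) ≤
      ENNReal.ofReal p * ∫⁻ s in Ioi 0, (M s - ENNReal.ofReal t₀) * ENNReal.ofReal (s ^ (p - 1)) := by
  have hmeas : AEMeasurable (rearrangement D) (volume.restrict (Ioi t₀)) :=
    (aemeasurable_restrict_of_antitoneOn measurableSet_Ioi (antitoneOn hD)).mono_measure
      (Measure.restrict_mono (Ioi_subset_Ioi ht₀) le_rfl)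
  rw [lintegral_rpow_eq_lintegral_meas_lt_mul _ (ae_of_all _ (nonneg D)) hmeas hp]
  gcongr ENNReal.ofReal p * ?_
  refine setLIntegral_mono' measurableSet_Ioi fun s (hs : 0 < s) => ?_
  gcongr
  rw [Measure.restrict_apply' measurableSet_Ioi]
  calc volume ({t | s < rearrangement D t} ∩ Ioi t₀)
      ≤ volume (Ioi t₀ ∩ {t | ENNReal.ofReal t < M s}) := measure_mono fun t ⟨hst, ht⟩ =>
        ⟨ht, (ofReal_lt_of_lt hs hst).trans_le (hM s hs)⟩
    _ ≤ M s - ENNReal.ofReal t₀ := volume_Ioi_inter_setOf_ofReal_lt_le ht₀ _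

end rearrangement

theorem setOf_lt_norm_sub_rpow_subset_ball {E : Type*} [SeminormedAddCommGroup E] {c s : ℝ}
    (hc : c < 0) (hs : 0 < s) (Ω : Set E) (x : E) :
    {y | y ∈ Ω ∧ s < ‖x - y‖ ^ c} ⊆ Ω ∩ ball x (s ^ c⁻¹) := by
  rintro y ⟨hy, hsy⟩
  refine ⟨hy, ?_⟩
  rw [mem_ball, dist_comm, dist_eq_norm, ← Real.rpow_rpow_inv (norm_nonneg (x - y)) hc.ne]
  exact Real.rpow_lt_rpow_of_neg hs hsy (inv_lt_zero.mpr hc)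

section AddHaar

variable {E : Type*} [NormedAddCommGroup E] [NormedSpace ℝ E] [FiniteDimensional ℝ E]
  [Nontrivial E] [MeasurableSpace E] [BorelSpace E] (μ : Measure E) [μ.IsAddHaarMeasure]

theorem tendsto_addHaar_ball_nhdsGT_zero (x : E) :
    Tendsto (fun r => μ (ball x r)) (𝓝[>] 0) (𝓝 0) := by
  have hpow : Tendsto (fun r : ℝ => ENNReal.ofReal (r ^ finrank ℝ E)) (𝓝 0) (𝓝 0) := by
    have := (continuous_pow (M := ℝ) (finrank ℝ E)).tendsto 0
    rw [zero_pow finrank_pos.ne'] at this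
    simpa using ENNReal.tendsto_ofReal this
  have := ENNReal.Tendsto.mul_const (hpow.mono_left (nhdsWithin_le_nhds (s := Ioi 0)))
    (Or.inr (measure_ball_lt_top (μ := μ) (x := 0) (r := 1)).ne)
  rw [zero_mul] at this
  exact this.congr' (eventually_nhdsWithin_of_forall fun r hr => (μ.addHaar_ball x hr.le).symm)

theorem exists_measure_setOf_lt_norm_sub_rpow_le {c : ℝ} (hc : c < 0) (Ω : Set E) (x : E)
    {t : ℝ} (ht : 0 < t) : ∃ s > 0, μ {y | y ∈ Ω ∧ s < ‖x - y‖ ^ c} ≤ ENNReal.ofReal t := by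
  obtain ⟨r, hrt, hr⟩ := (((tendsto_addHaar_ball_nhdsGT_zero μ x).eventually
    (ge_mem_nhds (ENNReal.ofReal_pos.mpr ht))).and self_mem_nhdsWithin).exists
  refine ⟨r ^ c, Real.rpow_pos_of_pos hr c, ?_⟩
  calc μ {y | y ∈ Ω ∧ r ^ c < ‖x - y‖ ^ c}
      ≤ μ (Ω ∩ ball x ((r ^ c) ^ c⁻¹)) :=
        measure_mono (setOf_lt_norm_sub_rpow_subset_ball hc (Real.rpow_pos_of_pos hr c) Ω x)
    _ ≤ μ (ball x r) := by
        rw [Real.rpow_rpow_inv (le_of_lt hr) hc.ne]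
        exact measure_mono inter_subset_right
    _ ≤ ENNReal.ofReal t := hrt

end AddHaar

theorem stmt_6_general (n : ℕ) (hn : 0 < n) (α : ℝ) (hαn : α < n)
    (Ω : Set (EuclideanSpace ℝ (Fin n))) :
    ∀ᵐ x ∂(volume.restrict Ω),
      (∫⁻ t in Ioi ((essSup (fun x : EuclideanSpace ℝ (Fin n) =>
            volume (Ω ∩ ball x 1)) (volume.restrict Ω)).toReal),
          ENNReal.ofReal
            ((sInf {s : ℝ | 0 < s ∧
                volume {y | y ∈ Ω ∧ s < ‖x - y‖ ^ (α - (n : ℝ))} ≤ ENNReal.ofReal t})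
              ^ ((n : ℝ) / ((n : ℝ) - α))))
        ≤ (n : ℝ≥0∞) *
            ∫⁻ r in Ioi (1 : ℝ),
              volume (Ω ∩ ball x r) * ENNReal.ofReal (r ^ (-(n : ℝ) - 1)) := by
  have : Nonempty (Fin n) := ⟨⟨0, hn⟩⟩
  have hc : α - (n : ℝ) < 0 := sub_neg.mpr hαn
  have hnα : 0 < (n : ℝ) - α := sub_pos.mpr hαn
  have hp : 0 < (n : ℝ) / (n - α) := div_pos (Nat.cast_pos.mpr hn) hnα
  set T := essSup (fun x : EuclideanSpace ℝ (Fin n) => volume (Ω ∩ ball x 1)) (volume.restrict Ω)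
  have hT : T ≠ ∞ := by
    refine ne_top_of_le_ne_top (measure_ball_lt_top (μ := volume)
      (x := (0 : EuclideanSpace ℝ (Fin n))) (r := 1)).ne
      (essSup_le_of_ae_le _ (ae_of_all _ fun x => ?_))
    rw [← Measure.addHaar_ball_center volume x]
    exact measure_mono inter_subset_right
  filter_upwards [ae_le_essSup (fun x => volume (Ω ∩ ball x 1))] with x hx
  set Λ := fun r => volume (Ω ∩ ball x r)
  calc _ ≤ ENNReal.ofReal (n / (n - α)) * ∫⁻ s in Ioi 0,
          (Λ (s ^ (α - n)⁻¹) - ENNReal.ofReal T.toReal) * ENNReal.ofReal (s ^ (n / (n - α) - 1)) :=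
        rearrangement.lintegral_rpow_le
          (fun t ht => exists_measure_setOf_lt_norm_sub_rpow_le volume hc Ω x ht)
          (fun s hs => measure_mono (setOf_lt_norm_sub_rpow_subset_ball hc hs Ω x))
          ENNReal.toReal_nonneg hp
    _ = ENNReal.ofReal (|α - n| * (n / (n - α))) * ∫⁻ r in Ioi 0,
          (Λ r - T) * ENNReal.ofReal (r ^ ((α - n) * (n / (n - α)) - 1)) := by
        rw [ENNReal.ofReal_toReal hT]
        exact lintegral_Ioi_comp_rpow_inv_mul_rpow (fun r => Λ r - T) hc.ne hp.le
    _ = n * ∫⁻ r in Ioi 0, (Λ r - T) * ENNReal.ofReal (r ^ (-(n : ℝ) - 1)) := by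
        rw [abs_of_neg hc, show -(α - n) * (n / (n - α)) = n by field_simp; ring,
          show (α - n) * (n / (n - α)) = -n by field_simp; ring, ENNReal.ofReal_natCast]
    _ ≤ _ := mul_le_mul_right (setLIntegral_Ioi_zero_tsub_mul_le fun r hr =>
          (measure_mono (inter_subset_inter_right _ (ball_subset_ball hr.2))).trans hx) _

/-- For measurable `Ω ⊆ ℝ^n`, `0 < α < n`, with `Λ_Ω(x,r) = |Ω ∩ B(x,r)|` and
`k*(x,·)` the nonincreasing rearrangement of `y ↦ |x−y|^{α−n}` over `Ω`, and
`λ(1) = ess sup_{x∈Ω} |Ω ∩ B(x,1)|`, one has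
`∫_{λ(1)}^∞ (k*(x,t))^{n/(n−α)} dt ≤ n ∫_1^∞ Λ_Ω(x,r) r^{−n−1} dr` for a.e. `x ∈ Ω`. -/
theorem stmt_6 (n : ℕ) (hn : 0 < n) (α : ℝ) (hα : 0 < α) (hαn : α < n)
    (Ω : Set (EuclideanSpace ℝ (Fin n))) (hΩ : MeasurableSet Ω) :
    ∀ᵐ x ∂(volume.restrict Ω),
      (∫⁻ t in Ioi ((essSup (fun x : EuclideanSpace ℝ (Fin n) =>
            volume (Ω ∩ ball x 1)) (volume.restrict Ω)).toReal),
          ENNReal.ofReal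
            ((sInf {s : ℝ | 0 < s ∧
                volume {y | y ∈ Ω ∧ s < ‖x - y‖ ^ (α - (n : ℝ))} ≤ ENNReal.ofReal t})
              ^ ((n : ℝ) / ((n : ℝ) - α))))
        ≤ (n : ℝ≥0∞) *
            ∫⁻ r in Ioi (1 : ℝ),
              volume (Ω ∩ ball x r) * ENNReal.ofReal (r ^ (-(n : ℝ) - 1)) :=
  stmt_6_general n hn α hαn Ω
end

section
/- Let p(x) = (x₈ − ‖x'‖²)² + x₈⁴ on ℝ⁸, where x = (x', x₈) ∈ ℝ⁷ × ℝ. Then p is elliptic of order 4 in the sense that its principal (degree 4) part p₄(x) = ‖x'‖⁴ + x₈⁴ satisfies p₄(x) ≥ c|x|⁴, p(x) > 0 for x ≠ 0, yet 1/p is NOT in L²(B₁), i.e. ∫_{|x|≤1} p(x)^{−2} dx = ∞. -/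
/-!
Write `s = ‖x'‖²` and `t = x₈`. Then `‖x‖² = s + t²` gives ellipticity, via
`(s + t²)² ≤ 2(s² + t⁴)`, and positivity. The quartic `p = (t - s)² + t⁴` is small near the
paraboloid `t = s`: on the slab `0 < xᵢ < ε` (`i ≤ 7`), `s < t < s + ε⁴`, which has volume `ε¹¹`,
one has `t ≤ 8ε²` and hence `p ≤ 2¹³ ε⁸`. So `∫_{B₁} p⁻² ≥ 2⁻²⁶ ε¹¹ ε⁻¹⁶ = 2⁻²⁶ ε⁻⁵`, which is
unbounded as `ε → 0`.
-/

open MeasureTheory Set Metric ENNReal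

namespace EuclideanSpace

variable {n : ℕ}

theorem norm_sq_eq_sum_castSucc_add_sq_last (x : EuclideanSpace ℝ (Fin (n + 1))) :
    ‖x‖ ^ 2 = ∑ i : Fin n, x i.castSucc ^ 2 + x (Fin.last n) ^ 2 := by
  rw [real_norm_sq_eq, Fin.sum_univ_castSucc]

def initLast (x : EuclideanSpace ℝ (Fin (n + 1))) : (Fin n → ℝ) × ℝ :=
  (fun i => x i.castSucc, x (Fin.last n))

theorem measurePreserving_initLast : MeasurePreserving (initLast (n := n)) := by
  have h := (Measure.measurePreserving_swap.comp
    (volume_preserving_piFinSuccAbove (fun _ : Fin (n + 1) => ℝ) (Fin.last n))).comp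
    (PiLp.volume_preserving_ofLp (Fin (n + 1)))
  convert h using 1
  · funext x
    simp only [initLast, Function.comp_apply, MeasurableEquiv.piFinSuccAbove_apply,
      Fin.insertNthEquiv_last, Fin.snocEquiv_symm_apply, Prod.swap_prod_mk]
    rfl
  · rfl

theorem volume_initLast_preimage_regionBetween {f g : (Fin n → ℝ) → ℝ}
    {s : Set (Fin n → ℝ)} (hf : Measurable f) (hg : Measurable g) (hs : MeasurableSet s) :
    volume (initLast ⁻¹' regionBetween f g s) = ∫⁻ y in s, ENNReal.ofReal ((g - f) y) := by
  rw [measurePreserving_initLast.measure_preimage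
    (measurableSet_regionBetween hf hg hs).nullMeasurableSet]
  exact volume_regionBetween_eq_lintegral' hf hg hs

end EuclideanSpace

open EuclideanSpace

section

variable {n : ℕ}

def cuspSlab (n : ℕ) (ε : ℝ) : Set (EuclideanSpace ℝ (Fin (n + 1))) :=
  initLast ⁻¹' regionBetween (fun y => ∑ i, y i ^ 2) (fun y => ∑ i, y i ^ 2 + ε ^ 4)
    (univ.pi fun _ => Ioo 0 ε)

theorem volume_cuspSlab {ε : ℝ} (hε : 0 ≤ ε) :
    volume (cuspSlab n ε) = ENNReal.ofReal (ε ^ (n + 4)) := by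
  have hsq : Measurable fun y : Fin n → ℝ => ∑ i, y i ^ 2 := by fun_prop
  rw [cuspSlab, volume_initLast_preimage_regionBetween hsq (hsq.add_const _)
    (MeasurableSet.univ_pi fun _ => measurableSet_Ioo)]
  simp only [Pi.sub_apply, add_sub_cancel_left, setLIntegral_const, volume_pi_pi, Real.volume_Ioo,
    sub_zero, Finset.prod_const, Finset.card_univ, Fintype.card_fin]
  rw [← ENNReal.ofReal_pow hε, ← ENNReal.ofReal_mul (by positivity), pow_add, mul_comm]

theorem sum_sq_le_and_mem_Ioo_of_mem_cuspSlab {ε : ℝ} {x : EuclideanSpace ℝ (Fin (n + 1))}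
    (hx : x ∈ cuspSlab n ε) :
    ∑ i : Fin n, x i.castSucc ^ 2 ≤ n * ε ^ 2 ∧
      x (Fin.last n) ∈
        Ioo (∑ i : Fin n, x i.castSucc ^ 2) (∑ i : Fin n, x i.castSucc ^ 2 + ε ^ 4) := by
  simp only [cuspSlab, regionBetween, initLast, mem_preimage, mem_ofPred_eq, mem_univ_pi] at hx
  refine ⟨?_, hx.2⟩
  calc ∑ i : Fin n, x i.castSucc ^ 2 ≤ ∑ _i : Fin n, ε ^ 2 :=
        Finset.sum_le_sum fun i _ => pow_le_pow_left₀ (hx.1 i).1.le (hx.1 i).2.le 2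
    _ = n * ε ^ 2 := by simp

def cuspQuartic (x : EuclideanSpace ℝ (Fin (n + 1))) : ℝ :=
  (x (Fin.last n) - ∑ i : Fin n, x i.castSucc ^ 2) ^ 2 + x (Fin.last n) ^ 4

theorem half_norm_pow_four_le (x : EuclideanSpace ℝ (Fin (n + 1))) :
    1 / 2 * ‖x‖ ^ 4 ≤ (∑ i : Fin n, x i.castSucc ^ 2) ^ 2 + x (Fin.last n) ^ 4 := by
  rw [show ‖x‖ ^ 4 = (‖x‖ ^ 2) ^ 2 by ring, norm_sq_eq_sum_castSucc_add_sq_last]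
  nlinarith [sq_nonneg (∑ i : Fin n, x i.castSucc ^ 2 - x (Fin.last n) ^ 2)]

theorem cuspQuartic_pos {x : EuclideanSpace ℝ (Fin (n + 1))} (hx : x ≠ 0) :
    0 < cuspQuartic x := by
  have hnorm : 0 < ∑ i : Fin n, x i.castSucc ^ 2 + x (Fin.last n) ^ 2 := by
    rw [← norm_sq_eq_sum_castSucc_add_sq_last]; positivity
  rcases eq_or_ne (x (Fin.last n)) 0 with ht | ht
  · rw [ht] at hnorm
    simp only [cuspQuartic, ht]
    nlinarith
  · exact add_pos_of_nonneg_of_pos (sq_nonneg _) (by positivity)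

end

theorem cuspSlab_subset_ball {ε : ℝ} (hε0 : 0 < ε) (hε : ε ≤ 1 / 8) :
    cuspSlab 7 ε ⊆ ball 0 1 := by
  intro x hx
  obtain ⟨hs, hst, hts⟩ := sum_sq_le_and_mem_Ioo_of_mem_cuspSlab hx
  rw [mem_ball_zero_iff, ← sq_lt_one_iff₀ (norm_nonneg x), norm_sq_eq_sum_castSucc_add_sq_last]
  set s := ∑ i : Fin 7, x i.castSucc ^ 2
  set t := x (Fin.last 7)
  have hs0 : 0 ≤ s := by positivity
  have hε2 : ε ^ 2 ≤ 1 / 64 := by nlinarith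
  have ht : t ≤ 1 / 8 := by push_cast at hs; nlinarith
  nlinarith

theorem cuspQuartic_le_of_mem_cuspSlab {ε : ℝ} (hε0 : 0 < ε) (hε : ε ≤ 1)
    {x : EuclideanSpace ℝ (Fin 8)} (hx : x ∈ cuspSlab 7 ε) :
    cuspQuartic x ≤ 2 ^ 13 * ε ^ 8 := by
  obtain ⟨hs, hst, hts⟩ := sum_sq_le_and_mem_Ioo_of_mem_cuspSlab hx
  set s := ∑ i : Fin 7, x i.castSucc ^ 2
  set t := x (Fin.last 7)
  have hs0 : 0 ≤ s := by positivity
  have hε4 : ε ^ 4 ≤ ε ^ 2 := pow_le_pow_of_le_one hε0.le hε (by norm_num)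
  have ht : t ≤ 8 * ε ^ 2 := by push_cast at hs; linarith
  have ht4 : t ^ 4 ≤ (8 * ε ^ 2) ^ 4 := pow_le_pow_left₀ (by linarith) ht 4
  have hts2 : (t - s) ^ 2 ≤ (ε ^ 4) ^ 2 := pow_le_pow_left₀ (by linarith) (by linarith) 2
  show (t - s) ^ 2 + t ^ 4 ≤ _
  nlinarith [pow_nonneg hε0.le 8]

theorem ofReal_le_lintegral_ball_inv_sq_cuspQuartic {ε : ℝ} (hε0 : 0 < ε) (hε : ε ≤ 1 / 8) :
    ENNReal.ofReal (1 / (2 ^ 26 * ε ^ 5)) ≤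
      ∫⁻ x in ball (0 : EuclideanSpace ℝ (Fin 8)) 1,
        ENNReal.ofReal (1 / cuspQuartic x ^ 2) := by
  have hslab : MeasurableSet (cuspSlab 7 ε) := by
    refine measurePreserving_initLast.measurable (measurableSet_regionBetween ?_ ?_ ?_) <;>
      first | fun_prop | exact MeasurableSet.univ_pi fun _ => measurableSet_Ioo
  have hbound : ∀ x ∈ cuspSlab 7 ε,
      ENNReal.ofReal (1 / (2 ^ 26 * ε ^ 16)) ≤ ENNReal.ofReal (1 / cuspQuartic x ^ 2) := by
    intro x hx
    have hp := cuspQuartic_le_of_mem_cuspSlab hε0 (by linarith) hx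
    have hst := (sum_sq_le_and_mem_Ioo_of_mem_cuspSlab hx).2.1
    have hp0 : 0 < cuspQuartic x :=
      add_pos_of_pos_of_nonneg (pow_pos (sub_pos.2 hst) 2) (by positivity)
    gcongr
    calc cuspQuartic x ^ 2 ≤ (2 ^ 13 * ε ^ 8) ^ 2 := by gcongr
      _ = 2 ^ 26 * ε ^ 16 := by ring
  calc ENNReal.ofReal (1 / (2 ^ 26 * ε ^ 5))
      = ENNReal.ofReal (1 / (2 ^ 26 * ε ^ 16)) * volume (cuspSlab 7 ε) := by
        rw [volume_cuspSlab hε0.le, ← ENNReal.ofReal_mul (by positivity)]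
        congr 1
        field_simp
    _ = ∫⁻ _x in cuspSlab 7 ε, ENNReal.ofReal (1 / (2 ^ 26 * ε ^ 16)) :=
        (setLIntegral_const _ _).symm
    _ ≤ ∫⁻ x in cuspSlab 7 ε, ENNReal.ofReal (1 / cuspQuartic x ^ 2) :=
        setLIntegral_mono' hslab hbound
    _ ≤ ∫⁻ x in ball (0 : EuclideanSpace ℝ (Fin 8)) 1,
          ENNReal.ofReal (1 / cuspQuartic x ^ 2) :=
        lintegral_mono_set (cuspSlab_subset_ball hε0 hε)

theorem lintegral_ball_inv_sq_cuspQuartic_eq_top :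
    ∫⁻ x in ball (0 : EuclideanSpace ℝ (Fin 8)) 1,
      ENNReal.ofReal (1 / cuspQuartic x ^ 2) = ⊤ := by
  refine eq_top_of_forall_nnreal_le fun r => ?_
  set ε : ℝ := 1 / (2 ^ 26 * (r + 1))
  have hε0 : 0 < ε := by positivity
  have hε : ε ≤ 1 / 8 := by
    rw [div_le_div_iff₀ (by positivity) (by norm_num)]; nlinarith [r.2]
  refine le_trans ?_ (ofReal_le_lintegral_ball_inv_sq_cuspQuartic hε0 hε)
  rw [← ENNReal.ofReal_coe_nnreal]
  refine ENNReal.ofReal_le_ofReal ?_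
  have hε5 : ε ^ 5 ≤ ε := pow_le_of_le_one hε0.le (hε.trans (by norm_num)) (by norm_num)
  calc (r : ℝ) ≤ 1 / (2 ^ 26 * ε) := by simp only [ε]; field_simp; linarith
    _ ≤ 1 / (2 ^ 26 * ε ^ 5) := by gcongr

/-- The quartic polynomial `p(x) = (x₈ − ‖x'‖²)² + x₈⁴` on `ℝ⁸` is elliptic
(its principal part `‖x'‖⁴ + x₈⁴` satisfies `p₄(x) ≥ c|x|⁴`) and positive away
from `0`, yet `1/p ∉ L²(B₁)`: `∫_{|x|≤1} p(x)^{−2} dx = ∞`. -/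
theorem stmt_10 :
    (∃ c : ℝ, 0 < c ∧ ∀ x : EuclideanSpace ℝ (Fin 8),
        c * ‖x‖ ^ 4 ≤ (∑ i : Fin 7, (x i.castSucc) ^ 2) ^ 2 + (x 7) ^ 4) ∧
    (∀ x : EuclideanSpace ℝ (Fin 8), x ≠ 0 →
        0 < (x 7 - ∑ i : Fin 7, (x i.castSucc) ^ 2) ^ 2 + (x 7) ^ 4) ∧
    (∫⁻ x in ball (0 : EuclideanSpace ℝ (Fin 8)) 1,
        ENNReal.ofReal
          (1 / ((x 7 - ∑ i : Fin 7, (x i.castSucc) ^ 2) ^ 2 + (x 7) ^ 4) ^ 2))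
      = ⊤ :=
  ⟨⟨1 / 2, by norm_num, half_norm_pow_four_le⟩, fun _ => cuspQuartic_pos,
    lintegral_ball_inv_sq_cuspQuartic_eq_top⟩
end

section
/- Let p be a real polynomial of even degree α on ℝ^n; assume p(0) = 0, p(x) ≥ c₁|x|^α for all x ∈ ℝ^n with c₁ > 0, and p not homogeneous. Write p = p_α + q + p_κ with p_α, p_κ the highest and lowest degree homogeneous parts, of degrees α and κ < α. Then for each ω ∈ S^{n−1} with p_κ(ω) > 0, ∫_0^{1} r^{n−1} p(rω)^{−n/α} dr ≤ C(1 + |log p_κ(ω)|) for a constant C independent of ω. -/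
set_option maxHeartbeats 1000000

open MeasureTheory Set MvPolynomial

private lemma eval_homog_smul {n d : ℕ} (φ : MvPolynomial (Fin n) ℝ)
    (hφ : φ.IsHomogeneous d) (r : ℝ) (x : Fin n → ℝ) :
    eval (fun i => r * x i) φ = r ^ d * eval x φ := by
  rw [eval_eq, eval_eq, Finset.mul_sum]
  refine Finset.sum_congr rfl fun m hm => ?_
  have hdeg : ∑ i ∈ m.support, m i = d := by
    have := hφ (mem_support_iff.mp hm)
    simpa [Finsupp.weight, Finsupp.degree, Finsupp.linearCombination, Finsupp.sum] using this
  calc φ.coeff m * ∏ i ∈ m.support, (r * x i) ^ m i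
      = φ.coeff m * ((∏ i ∈ m.support, r ^ m i) * ∏ i ∈ m.support, x i ^ m i) := by
        rw [← Finset.prod_mul_distrib]; simp [mul_pow]
    _ = r ^ d * (φ.coeff m * ∏ i ∈ m.support, x i ^ m i) := by
        rw [Finset.prod_pow_eq_pow_sum, hdeg]; ring

private lemma sum_components {n α : ℕ} (P : MvPolynomial (Fin n) ℝ)
    (hhigh : ∀ d > α, P.homogeneousComponent d = 0) :
    ∑ d ∈ Finset.range (α + 1), P.homogeneousComponent d = P := by
  conv_rhs => rw [← P.sum_homogeneousComponent]
  rcases le_total (P.totalDegree + 1) (α + 1) with h | h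
  · exact (Finset.sum_subset (Finset.range_subset_range.2 h) fun d _ hd =>
      homogeneousComponent_eq_zero _ _
        (by simp only [Finset.mem_range, not_lt] at hd; omega)).symm
  · exact Finset.sum_subset (Finset.range_subset_range.2 h) fun d _ hd =>
      hhigh d (by simp only [Finset.mem_range, not_lt] at hd; omega)

/-- For a real non-homogeneous polynomial `p` on `ℝ^n` of even degree `α` with
`p(0)=0`, `p(x) ≥ c₁|x|^α`, highest homogeneous part `p_α ≥ c₀|x|^α` and lowest
homogeneous part `p_κ ≥ 0` of degree `κ < α`, one has the uniform radial estimate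
`∫_0^1 r^{n−1} p(rω)^{−n/α} dr ≤ C (1 + |log p_κ(ω)|)` for all `ω ∈ S^{n−1}` with
`p_κ(ω) > 0`, with `C` independent of `ω`. -/
theorem stmt_11 (n α κ : ℕ) (hn : 0 < n) (hα : 0 < α) (hαeven : Even α)
    (hκα : κ < α) (P : MvPolynomial (Fin n) ℝ)
    (hlow : ∀ d < κ, P.homogeneousComponent d = 0)
    (hhigh : ∀ d > α, P.homogeneousComponent d = 0)
    (hκne : P.homogeneousComponent κ ≠ 0)
    (hαne : P.homogeneousComponent α ≠ 0)
    (c₀ c₁ : ℝ) (hc₀ : 0 < c₀) (hc₁ : 0 < c₁)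
    (hP0 : MvPolynomial.constantCoeff P = 0)
    (hPα : ∀ x : EuclideanSpace ℝ (Fin n),
      c₀ * ‖x‖ ^ α ≤ MvPolynomial.eval (fun i => x i) (P.homogeneousComponent α))
    (hPκ : ∀ x : EuclideanSpace ℝ (Fin n),
      0 ≤ MvPolynomial.eval (fun i => x i) (P.homogeneousComponent κ))
    (hP : ∀ x : EuclideanSpace ℝ (Fin n),
      c₁ * ‖x‖ ^ α ≤ MvPolynomial.eval (fun i => x i) P) :
    ∃ C : ℝ, 0 < C ∧ ∀ ω : EuclideanSpace ℝ (Fin n), ‖ω‖ = 1 →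
      0 < MvPolynomial.eval (fun i => ω i) (P.homogeneousComponent κ) →
      (∫ r in (0:ℝ)..1,
          r ^ (n - 1) *
            (MvPolynomial.eval (fun i => r * ω i) P) ^ (-(n : ℝ) / α))
        ≤ C * (1 + |Real.log
            (MvPolynomial.eval (fun i => ω i) (P.homogeneousComponent κ))|) := by
  have hκ1 : 1 ≤ κ := by
    rcases Nat.eq_zero_or_pos κ with h | h
    · exfalso; apply hκne; rw [h, homogeneousComponent_zero]
      have : coeff 0 P = 0 := hP0
      rw [this, map_zero]
    · exact h
  set β : ℝ := (n : ℝ) / α with hβdef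
  have hnR : (0:ℝ) < n := by exact_mod_cast hn
  have hαR : (0:ℝ) < α := by exact_mod_cast hα
  have hβpos : 0 < β := div_pos hnR hαR
  have hαβ : (α : ℝ) * β = n := by rw [hβdef]; field_simp
  set y : ℝ := (n : ℝ) - 1 - κ * β with hydef
  have hκβ : (κ:ℝ) * β < n := by
    rw [hβdef]
    calc (κ:ℝ) * ((n:ℝ)/α) < (α:ℝ) * ((n:ℝ)/α) := by
          apply mul_lt_mul_of_pos_right _ (div_pos hnR hαR)
          exact_mod_cast hκα
      _ = n := by field_simp
  have hy1 : 0 < y + 1 := by simp only [hydef]; linarith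
  have hy : -1 < y := by linarith
  have hexp : 0 ≤ y + 1 - β := by
    have : ((κ:ℝ) + 1) * β ≤ n := by
      rw [hβdef]
      calc ((κ:ℝ)+1) * ((n:ℝ)/α) ≤ (α:ℝ) * ((n:ℝ)/α) := by
            apply mul_le_mul_of_nonneg_right _ (div_pos hnR hαR).le
            have : κ + 1 ≤ α := hκα
            exact_mod_cast this
        _ = n := by field_simp
    simp only [hydef]; nlinarith
  -- bound on the sphere
  have hcont : ∀ q : MvPolynomial (Fin n) ℝ,
      Continuous fun x : EuclideanSpace ℝ (Fin n) => eval (fun i => x i) q := by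
    intro q
    apply (MvPolynomial.continuous_eval q).comp
    exact continuous_pi fun i => (continuous_apply i).comp (PiLp.continuous_ofLp 2 _)
  obtain ⟨M, hM1, hM⟩ : ∃ M : ℝ, 1 ≤ M ∧ ∀ x : EuclideanSpace ℝ (Fin n), ‖x‖ = 1 →
      ∑ d ∈ Finset.range (α + 1), |eval (fun i => x i) (P.homogeneousComponent d)| ≤ M := by
    have hg : Continuous fun x : EuclideanSpace ℝ (Fin n) =>
        ∑ d ∈ Finset.range (α + 1), |eval (fun i => x i) (P.homogeneousComponent d)| :=
      continuous_finset_sum _ fun d _ => (hcont _).abs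
    obtain ⟨M₀, hM₀⟩ := (isCompact_sphere (0 : EuclideanSpace ℝ (Fin n))
      1).exists_bound_of_continuousOn hg.continuousOn
    refine ⟨max M₀ 1, le_max_right _ _, fun x hx => ?_⟩
    have := hM₀ x (by simpa [mem_sphere_iff_norm] using hx)
    calc _ ≤ ‖∑ d ∈ Finset.range (α + 1),
          |eval (fun i => x i) (P.homogeneousComponent d)|‖ := le_abs_self _
      _ ≤ M₀ := this
      _ ≤ max M₀ 1 := le_max_left _ _
  have hMpos : 0 < M := lt_of_lt_of_le one_pos hM1
  have h2M : (1:ℝ) < 2 * M := by linarith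
  set c₂ : ℝ := c₁ ^ (-β) with hc₂def
  have hc₂pos : 0 < c₂ := Real.rpow_pos_of_pos hc₁ _
  set C₁ : ℝ := (2:ℝ) ^ β * M ^ (y + 1 - β) * (2 * M) ^ (-(y + 1)) / (y + 1) with hC₁def
  have hC₁pos : 0 < C₁ := by
    apply div_pos _ hy1
    positivity
  have hlog2M : 0 < Real.log (2 * M) := Real.log_pos h2M
  refine ⟨C₁ + c₂ * Real.log (2 * M) + c₂, by positivity, ?_⟩
  intro ω hω hs
  set s : ℝ := eval (fun i => ω i) (P.homogeneousComponent κ) with hsdef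
  set e : ℕ → ℝ := fun d => eval (fun i => ω i) (P.homogeneousComponent d) with hedef
  have hsM : s ≤ M := by
    calc s ≤ |e κ| := le_abs_self _
      _ ≤ ∑ d ∈ Finset.range (α + 1), |e d| :=
        Finset.single_le_sum (f := fun d => |e d|) (fun d _ => abs_nonneg _)
          (Finset.mem_range.2 (lt_trans hκα (Nat.lt_succ_self α)))
      _ ≤ M := hM ω hω
  set t : ℝ := s / (2 * M) with htdef
  have ht0 : 0 < t := div_pos hs (by linarith)
  have ht1 : t ≤ 1 := by
    rw [htdef, div_le_one (by linarith)]
    linarith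
  set f : ℝ → ℝ := fun r =>
    r ^ (n - 1) * (eval (fun i => r * ω i) P) ^ (-(n : ℝ) / α) with hfdef
  have hβeq : -(n : ℝ) / α = -β := by rw [hβdef, neg_div]
  -- expansion
  have hEexp : ∀ r : ℝ, eval (fun i => r * ω i) P
      = ∑ d ∈ Finset.range (α + 1), r ^ d * e d := by
    intro r
    conv_lhs => rw [← sum_components P hhigh]
    rw [map_sum]
    exact Finset.sum_congr rfl fun d _ =>
      eval_homog_smul _ (homogeneousComponent_isHomogeneous d P) r _
  -- global lower bound
  have hlb2 : ∀ r : ℝ, 0 ≤ r → c₁ * r ^ α ≤ eval (fun i => r * ω i) P := by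
    intro r hr
    have := hP (r • ω)
    have hnorm : ‖r • ω‖ = r := by
      rw [norm_smul, hω, Real.norm_eq_abs, abs_of_nonneg hr, mul_one]
    rw [hnorm] at this
    convert this using 2
    congr 1
  have hEpos : ∀ r : ℝ, 0 < r → 0 < eval (fun i => r * ω i) P := fun r hr =>
    lt_of_lt_of_le (by positivity) (hlb2 r hr.le)
  -- lower bound for small r
  have hlb1 : ∀ r ∈ Ioc (0:ℝ) t, r ^ κ * (s / 2) ≤ eval (fun i => r * ω i) P := by
    intro r hr
    obtain ⟨hr0, hrt⟩ := hr
    have hr1 : r ≤ 1 := hrt.trans ht1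
    rw [hEexp r]
    have hsplit : ∑ d ∈ Finset.range (α + 1), r ^ d * e d
        = r ^ κ * s + ∑ d ∈ Finset.Ico (κ + 1) (α + 1), r ^ d * e d := by
      rw [Finset.range_eq_Ico, ← Finset.sum_Ico_consecutive _ (Nat.zero_le (κ+1)) (by omega),
        Finset.sum_Ico_succ_top (Nat.zero_le κ), ← Finset.range_eq_Ico]
      have : ∑ d ∈ Finset.range κ, r ^ d * e d = 0 := by
        apply Finset.sum_eq_zero
        intro d hd
        rw [hedef]
        simp [hlow d (Finset.mem_range.1 hd)]
      rw [this, zero_add, hsdef]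
    rw [hsplit]
    have hrest : |∑ d ∈ Finset.Ico (κ + 1) (α + 1), r ^ d * e d| ≤ r ^ (κ+1) * M := by
      calc |∑ d ∈ Finset.Ico (κ + 1) (α + 1), r ^ d * e d|
          ≤ ∑ d ∈ Finset.Ico (κ + 1) (α + 1), |r ^ d * e d| := Finset.abs_sum_le_sum_abs _ _
        _ ≤ ∑ d ∈ Finset.Ico (κ + 1) (α + 1), r ^ (κ+1) * |e d| := by
            apply Finset.sum_le_sum
            intro d hd
            rw [abs_mul, abs_of_nonneg (pow_nonneg hr0.le d)]
            apply mul_le_mul_of_nonneg_right _ (abs_nonneg _)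
            exact pow_le_pow_of_le_one hr0.le hr1 (Finset.mem_Ico.1 hd).1
        _ = r ^ (κ+1) * ∑ d ∈ Finset.Ico (κ + 1) (α + 1), |e d| := by
            rw [Finset.mul_sum]
        _ ≤ r ^ (κ+1) * M := by
            apply mul_le_mul_of_nonneg_left _ (pow_nonneg hr0.le _)
            calc ∑ d ∈ Finset.Ico (κ + 1) (α + 1), |e d|
                ≤ ∑ d ∈ Finset.range (α + 1), |e d| := by
                  apply Finset.sum_le_sum_of_subset_of_nonneg
                  · intro d hd
                    rw [Finset.mem_range]
                    exact (Finset.mem_Ico.1 hd).2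
                  · intro d _ _; exact abs_nonneg _
              _ ≤ M := hM ω hω
    have hrkM : r ^ (κ+1) * M ≤ r ^ κ * (s / 2) := by
      rw [pow_succ]
      calc r ^ κ * r * M ≤ r ^ κ * t * M := by
            apply mul_le_mul_of_nonneg_right _ hMpos.le
            exact mul_le_mul_of_nonneg_left hrt (pow_nonneg hr0.le κ)
        _ = r ^ κ * (s / 2) := by
            rw [htdef]; field_simp
    have := neg_abs_le (∑ d ∈ Finset.Ico (κ + 1) (α + 1), r ^ d * e d)
    nlinarith [hrest, hrkM]
  -- continuity of f on positive reals
  have hfc : ContinuousOn f (Ioi (0:ℝ)) := by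
    apply ContinuousOn.mul (continuous_pow (n-1)).continuousOn
    apply ContinuousOn.rpow_const
    · apply Continuous.continuousOn
      apply (MvPolynomial.continuous_eval P).comp
      exact continuous_pi fun i => (continuous_id.mul continuous_const)
    · intro r hr
      exact Or.inl (ne_of_gt (hEpos r hr))
  have hfnonneg : ∀ r : ℝ, 0 < r → 0 ≤ f r := by
    intro r hr
    apply mul_nonneg (pow_nonneg hr.le _)
    exact Real.rpow_nonneg (hEpos r hr).le _
  -- the dominating functions
  set g1 : ℝ → ℝ := fun r => (s / 2) ^ (-β) * r ^ y with hg1def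
  set g2 : ℝ → ℝ := fun r => c₂ * (1 / r) with hg2def
  have hg1int : IntervalIntegrable g1 volume 0 t :=
    (intervalIntegral.intervalIntegrable_rpow' hy).const_mul _
  have hfg1 : ∀ r ∈ Ioc (0:ℝ) t, f r ≤ g1 r := by
    intro r hr
    obtain ⟨hr0, hrt⟩ := hr
    have hbase : 0 < r ^ κ * (s / 2) := by positivity
    have h1 : (eval (fun i => r * ω i) P) ^ (-(n : ℝ) / α)
        ≤ (r ^ κ * (s / 2)) ^ (-β) := by
      rw [hβeq]
      exact Real.rpow_le_rpow_of_nonpos hbase (hlb1 r ⟨hr0, hrt⟩) (neg_nonpos.2 hβpos.le)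
    have h2 : f r ≤ r ^ (n-1) * (r ^ κ * (s / 2)) ^ (-β) := by
      apply mul_le_mul_of_nonneg_left h1 (pow_nonneg hr0.le _)
    refine h2.trans (le_of_eq ?_)
    rw [Real.mul_rpow (pow_nonneg hr0.le κ) (by positivity)]
    rw [← Real.rpow_natCast r κ, ← Real.rpow_mul hr0.le]
    rw [← Real.rpow_natCast r (n-1)]
    rw [show ((n - 1 : ℕ) : ℝ) = (n:ℝ) - 1 by
      rw [Nat.cast_sub hn]; norm_num]
    simp only [hg1def]
    have hr' : r ^ ((n:ℝ) - 1) * r ^ ((κ:ℝ) * -β) = r ^ y := by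
      rw [← Real.rpow_add hr0]; congr 1; rw [hydef]; ring
    calc r ^ ((n:ℝ) - 1) * (r ^ ((κ:ℝ) * -β) * (s/2) ^ (-β))
        = (s/2) ^ (-β) * (r ^ ((n:ℝ) - 1) * r ^ ((κ:ℝ) * -β)) := by ring
      _ = (s/2) ^ (-β) * r ^ y := by rw [hr']
  have hfmeas : AEStronglyMeasurable f (volume.restrict (Set.uIoc (0:ℝ) t)) := by
    rw [uIoc_of_le ht0.le]
    exact (hfc.mono (Ioc_subset_Ioi_self)).aestronglyMeasurable measurableSet_Ioc
  have hI1 : IntervalIntegrable f volume 0 t := by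
    apply hg1int.mono_fun hfmeas
    rw [Filter.EventuallyLE, uIoc_of_le ht0.le, ae_restrict_iff' measurableSet_Ioc]
    apply Filter.Eventually.of_forall
    intro r hr
    rw [Real.norm_eq_abs, abs_of_nonneg (hfnonneg r hr.1)]
    exact (hfg1 r hr).trans (le_abs_self _)
  have hI2 : IntervalIntegrable f volume t 1 := by
    apply ContinuousOn.intervalIntegrable
    apply hfc.mono
    intro r hr
    rw [uIcc_of_le ht1, mem_Icc] at hr
    exact lt_of_lt_of_le ht0 hr.1
  -- first piece
  have hInt1 : (∫ r in (0:ℝ)..t, f r) ≤ C₁ := by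
    have step : (∫ r in (0:ℝ)..t, f r) ≤ ∫ r in (0:ℝ)..t, g1 r := by
      apply intervalIntegral.integral_mono_on ht0.le hI1 hg1int
      intro r hr
      rcases eq_or_lt_of_le hr.1 with h | h
      · -- r = 0
        have hf0 : f 0 = 0 := by
          rw [hfdef]
          simp only
          have : eval (fun i => (0:ℝ) * ω i) P = 0 := by
            have : (fun i => (0:ℝ) * ω i) = fun _ => (0:ℝ) := by funext i; ring
            rw [this, eval_zero', hP0]
          rw [this, Real.zero_rpow, mul_zero]
          rw [hβeq]
          exact ne_of_lt (neg_neg_iff_pos.2 hβpos)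
        rw [← h, hf0]
        rw [hg1def]
        apply mul_nonneg (Real.rpow_nonneg (by positivity) _) (Real.rpow_nonneg le_rfl _)
      · exact hfg1 r ⟨h, hr.2⟩
    refine step.trans ?_
    rw [hg1def]
    rw [intervalIntegral.integral_const_mul, integral_rpow (Or.inl hy),
      Real.zero_rpow (by linarith), sub_zero]
    have htval : t ^ (y + 1) = s ^ (y+1) * (2*M) ^ (-(y+1)) := by
      rw [htdef, Real.div_rpow hs.le (by linarith), Real.rpow_neg (by linarith), div_eq_mul_inv]
    have hsval : (s/2) ^ (-β) = s ^ (-β) * 2 ^ β := by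
      rw [Real.div_rpow hs.le (by norm_num), Real.rpow_neg (by norm_num : (0:ℝ) ≤ 2),
        div_eq_mul_inv, inv_inv]
    rw [htval, hsval, hC₁def]
    rw [← mul_div_assoc, div_le_div_iff_of_pos_right hy1]
    have hspow : s ^ (-β) * s ^ (y+1) = s ^ (y + 1 - β) := by
      rw [← Real.rpow_add hs]; congr 1; ring
    calc s ^ (-β) * 2 ^ β * (s ^ (y+1) * (2*M) ^ (-(y+1)))
        = 2 ^ β * (s ^ (-β) * s ^ (y+1)) * (2*M) ^ (-(y+1)) := by ring
      _ = 2 ^ β * s ^ (y + 1 - β) * (2*M) ^ (-(y+1)) := by rw [hspow]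
      _ ≤ 2 ^ β * M ^ (y + 1 - β) * (2*M) ^ (-(y+1)) := by
          apply mul_le_mul_of_nonneg_right _ (Real.rpow_nonneg (by linarith) _)
          apply mul_le_mul_of_nonneg_left _ (Real.rpow_nonneg (by norm_num) _)
          exact Real.rpow_le_rpow hs.le hsM hexp
  -- second piece
  have hg2int : IntervalIntegrable g2 volume t 1 := by
    apply IntervalIntegrable.const_mul
    apply intervalIntegral.intervalIntegrable_one_div
    · intro x hx
      rw [uIcc_of_le ht1, mem_Icc] at hx
      exact ne_of_gt (lt_of_lt_of_le ht0 hx.1)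
    · apply Continuous.continuousOn; fun_prop
  have hfg2 : ∀ r ∈ Icc t 1, f r ≤ g2 r := by
    intro r hr
    obtain ⟨hrt, hr1⟩ := hr
    have hr0 : 0 < r := lt_of_lt_of_le ht0 hrt
    have h1 : (eval (fun i => r * ω i) P) ^ (-(n : ℝ) / α) ≤ (c₁ * r ^ α) ^ (-β) := by
      rw [hβeq]
      exact Real.rpow_le_rpow_of_nonpos (by positivity) (hlb2 r hr0.le)
        (neg_nonpos.2 hβpos.le)
    have h2 : f r ≤ r ^ (n-1) * (c₁ * r ^ α) ^ (-β) :=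
      mul_le_mul_of_nonneg_left h1 (pow_nonneg hr0.le _)
    refine h2.trans (le_of_eq ?_)
    rw [Real.mul_rpow hc₁.le (pow_nonneg hr0.le α)]
    rw [← Real.rpow_natCast r α, ← Real.rpow_mul hr0.le, hg2def, hc₂def]
    rw [← Real.rpow_natCast r (n-1),
      show ((n - 1 : ℕ) : ℝ) = (n:ℝ) - 1 by rw [Nat.cast_sub hn]; norm_num]
    rw [show r ^ ((n:ℝ) - 1) * (c₁ ^ (-β) * r ^ ((α:ℝ) * (-β)))
        = c₁ ^ (-β) * (r ^ ((n:ℝ) - 1) * r ^ ((α:ℝ) * (-β))) by ring]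
    rw [← Real.rpow_add hr0]
    congr 1
    rw [show (n:ℝ) - 1 + (α:ℝ) * (-β) = -1 by rw [mul_neg, hαβ]; ring]
    rw [Real.rpow_neg_one, one_div]
  have hInt2 : (∫ r in t..(1:ℝ), f r) ≤ c₂ * Real.log (2*M) + c₂ * |Real.log s| := by
    have step : (∫ r in t..(1:ℝ), f r) ≤ ∫ r in t..(1:ℝ), g2 r :=
      intervalIntegral.integral_mono_on ht1 hI2 hg2int hfg2
    refine step.trans ?_
    rw [hg2def, intervalIntegral.integral_const_mul, integral_one_div_of_pos ht0 one_pos]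
    rw [htdef, one_div_div, Real.log_div (by linarith) (ne_of_gt hs)]
    have : Real.log (2*M) - Real.log s ≤ Real.log (2*M) + |Real.log s| := by
      have := neg_abs_le (Real.log s); linarith
    calc c₂ * (Real.log (2*M) - Real.log s)
        ≤ c₂ * (Real.log (2*M) + |Real.log s|) := mul_le_mul_of_nonneg_left this hc₂pos.le
      _ = c₂ * Real.log (2*M) + c₂ * |Real.log s| := by ring
  -- combine
  have hsplit : (∫ r in (0:ℝ)..1, f r) = (∫ r in (0:ℝ)..t, f r) + ∫ r in t..(1:ℝ), f r :=
    (intervalIntegral.integral_add_adjacent_intervals hI1 hI2).symm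
  have habs : 0 ≤ |Real.log s| := abs_nonneg _
  calc (∫ r in (0:ℝ)..1, f r) = (∫ r in (0:ℝ)..t, f r) + ∫ r in t..(1:ℝ), f r := hsplit
    _ ≤ C₁ + (c₂ * Real.log (2*M) + c₂ * |Real.log s|) := add_le_add hInt1 hInt2
    _ ≤ (C₁ + c₂ * Real.log (2*M) + c₂) * (1 + |Real.log s|) := by
        nlinarith [mul_nonneg (add_pos hC₁pos (mul_pos hc₂pos hlog2M)).le habs]
end

section
/- Let 0 < α < n, φ_ε as above normalized: φ̃_ε = φ_ε / ‖φ_ε‖_{n/α}. Then there is a constant C (independent of ε) such that for all x with |x| ≤ ε/2, I_α φ̃_ε(x)^{n/(n−α)} ≥ |B₁| log(r₀^n/ε^n) − C, where I_α f(x) = ∫ |x−y|^{α−n} f(y) dy. -/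
/-!
For `‖x‖ ≤ ε/2` and `ε < ‖y‖` we have `‖x - y‖ ≤ ‖y‖ + ε/2`, and the tangent-line bound for the
convex function `t ↦ t^(α-n)` gives
`‖x - y‖^(α-n) ‖y‖^(-α) ≥ ‖y‖^(-n) - (n-α)(ε/2)‖y‖^(-n-1)`.
In polar coordinates the first term integrates over the annulus `ε < ‖y‖ < r₀` to
`L = |B₁| log(r₀^n/ε^n)` and the second to at most `n(n-α)|B₁|/2`, so `I_α φ_ε(x) ≥ L - C₁`
with `C₁` independent of `ε`. With `p = n/(n-α)`, Bernoulli's inequality then gives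
`(I_α φ_ε(x) / L^(α/n))^p ≥ L (1 - C₁/L)^p ≥ L - p C₁`.
-/

open MeasureTheory Set Metric

lemma one_add_mul_le_rpow_one_add_of_nonpos {s β : ℝ} (hs : -1 < s) (hβ : β ≤ 0) :
    1 + β * s ≤ (1 + s) ^ β := by
  have hlog : Real.log (1 + s) ≤ s := by
    linarith [Real.log_le_sub_one_of_pos (show 0 < 1 + s by linarith)]
  calc 1 + β * s ≤ 1 + β * Real.log (1 + s) := by
        linarith [mul_le_mul_of_nonpos_left hlog hβ]
    _ ≤ Real.exp (Real.log (1 + s) * β) := by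
        linarith [Real.add_one_le_exp (Real.log (1 + s) * β)]
    _ = (1 + s) ^ β := (Real.rpow_def_of_pos (by linarith) β).symm

lemma sub_mul_le_rpow_div_rpow {d α L C I : ℝ} (hα : 0 < α) (hαd : α < d) (hL : 0 < L)
    (hC : 0 ≤ C) (hI0 : 0 ≤ I) (hI : L - C ≤ I) :
    L - d / (d - α) * C ≤ (I / L ^ (α / d)) ^ (d / (d - α)) := by
  have hd : 0 < d := hα.trans hαd
  have hdα : 0 < d - α := by linarith
  set p := d / (d - α)
  have hp : 1 ≤ p := (one_le_div hdα).2 (by linarith)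
  rcases le_or_gt L C with hLC | hCL
  · calc L - p * C ≤ 0 := by nlinarith
      _ ≤ _ := by positivity
  set s := -(C / L)
  have hs : -1 ≤ s := by
    simp only [s, neg_le_neg_iff]; exact (div_le_one hL).2 hCL.le
  have hLs : L - C = L * (1 + s) := by simp only [s]; field_simp; ring
  have hexp : (1 - α / d) * p = 1 := by simp only [p]; field_simp
  have hbase : L ^ (1 - α / d) * (1 + s) ≤ I / L ^ (α / d) := by
    rw [Real.rpow_sub hL, Real.rpow_one, le_div_iff₀ (by positivity)]
    calc L / L ^ (α / d) * (1 + s) * L ^ (α / d) = L - C := by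
          rw [hLs]; field_simp
      _ ≤ I := hI
  calc L - p * C = L * (1 + p * s) := by simp only [s]; field_simp; ring
    _ ≤ L * (1 + s) ^ p := by gcongr; exact one_add_mul_self_le_rpow_one_add hs hp
    _ = (L ^ (1 - α / d) * (1 + s)) ^ p := by
          rw [Real.mul_rpow (by positivity) (by linarith), ← Real.rpow_mul hL.le, hexp,
            Real.rpow_one]
    _ ≤ (I / L ^ (α / d)) ^ p := by gcongr; exact mul_nonneg (by positivity) (by linarith)

lemma inv_sub_le_rpow_mul_add_rpow {t δ d α : ℝ} (ht : 0 < t) (hδ : 0 ≤ δ) (hαd : α ≤ d) :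
    t⁻¹ - (d - α) * δ / t ^ 2 ≤ t ^ (d - 1) * ((t + δ) ^ (α - d) * t ^ (-α)) := by
  have hpow : t ^ (d - 1) * (t ^ (α - d) * t ^ (-α)) = t⁻¹ := by
    rw [← Real.rpow_add ht, ← Real.rpow_add ht, ← Real.rpow_neg_one]; ring_nf
  have hsplit : (t + δ) ^ (α - d) = t ^ (α - d) * (1 + δ / t) ^ (α - d) := by
    rw [← Real.mul_rpow ht.le (by positivity)]; field_simp
  calc t⁻¹ - (d - α) * δ / t ^ 2 = t⁻¹ * (1 + (α - d) * (δ / t)) := by field_simp; ring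
    _ ≤ t⁻¹ * (1 + δ / t) ^ (α - d) := by
        gcongr
        exact one_add_mul_le_rpow_one_add_of_nonpos (by linarith [div_nonneg hδ ht.le])
          (by linarith)
    _ = t ^ (d - 1) * ((t + δ) ^ (α - d) * t ^ (-α)) := by
        rw [hsplit, ← hpow]; ring

lemma log_div_sub_le_integral_rpow_mul_add_rpow {ε r d α : ℝ} (hε : 0 < ε) (hεr : ε < r)
    (hαd : α ≤ d) :
    Real.log (r / ε) - (d - α) / 2
      ≤ ∫ t in Ioo ε r, t ^ (d - 1) * ((t + ε / 2) ^ (α - d) * t ^ (-α)) := by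
  have hpos : ∀ t ∈ Icc ε r, 0 < t := fun t ht => hε.trans_le ht.1
  set k := (d - α) * (ε / 2)
  have hk : 0 ≤ k := mul_nonneg (by linarith) (by positivity)
  have hlower_cont : ContinuousOn (fun t => t⁻¹ - k / t ^ 2) (Icc ε r) := by
    fun_prop (disch := intro t ht; have := hpos t ht; first | positivity | exact this.ne')
  have hupper_cont : ContinuousOn (fun t => t ^ (d - 1) * ((t + ε / 2) ^ (α - d) * t ^ (-α)))
      (Icc ε r) := by
    fun_prop (disch := intro t ht; have := hpos t ht; first | left; positivity | positivity)
  have hlower : ∫ t in Ioo ε r, (t⁻¹ - k / t ^ 2) = Real.log (r / ε) - k * (ε⁻¹ - r⁻¹) := by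
    rw [← integral_Ioc_eq_integral_Ioo, ← intervalIntegral.integral_of_le hεr.le,
      intervalIntegral.integral_eq_sub_of_hasDerivAt (f := fun t => Real.log t + k * t⁻¹)
        (fun t ht => ?_) (hlower_cont.intervalIntegrable_of_Icc hεr.le)]
    · rw [Real.log_div (by linarith) hε.ne']; ring
    · rw [uIcc_of_le hεr.le] at ht
      exact ((Real.hasDerivAt_log (hpos t ht).ne').add
        ((hasDerivAt_inv (hpos t ht).ne').const_mul k)).congr_deriv (by ring)
  calc Real.log (r / ε) - (d - α) / 2 ≤ Real.log (r / ε) - k * (ε⁻¹ - r⁻¹) := by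
        have : k * ε⁻¹ = (d - α) / 2 := by simp only [k]; field_simp
        have : 0 ≤ k * r⁻¹ := mul_nonneg hk (inv_nonneg.2 (by linarith))
        linarith [mul_sub k ε⁻¹ r⁻¹]
    _ = ∫ t in Ioo ε r, (t⁻¹ - k / t ^ 2) := hlower.symm
    _ ≤ _ := setIntegral_mono_on (hlower_cont.integrableOn_Icc.mono_set Ioo_subset_Icc_self)
        (hupper_cont.integrableOn_Icc.mono_set Ioo_subset_Icc_self) measurableSet_Ioo
        fun t ht => inv_sub_le_rpow_mul_add_rpow (hε.trans ht.1) (by positivity) hαd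

lemma integrable_annulus_of_norm_le {E F : Type*} [NormedAddCommGroup E] [MeasurableSpace E]
    [OpensMeasurableSpace E] [ProperSpace E] [NormedAddCommGroup F] {μ : Measure E}
    [IsFiniteMeasureOnCompacts μ] {a b M : ℝ} {f : E → F} (hf : AEStronglyMeasurable f μ)
    (hM : ∀ x, a < ‖x‖ → ‖x‖ < b → ‖f x‖ ≤ M) :
    Integrable (fun x => if a < ‖x‖ ∧ ‖x‖ < b then f x else 0) μ := by
  set S := {x : E | a < ‖x‖ ∧ ‖x‖ < b}
  have hS : MeasurableSet S :=
    ((isOpen_lt continuous_const continuous_norm).inter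
      (isOpen_lt continuous_norm continuous_const)).measurableSet
  have hSb : S ⊆ ball 0 b := fun x hx => mem_ball_zero_iff.2 hx.2
  have hfS : (fun x => if a < ‖x‖ ∧ ‖x‖ < b then f x else 0) = S.indicator f := by
    ext x; simp [S, indicator_apply]
  rw [hfS, integrable_indicator_iff hS]
  exact Measure.integrableOn_of_bounded ((measure_mono hSb).trans_lt measure_ball_lt_top).ne hf
    ((ae_restrict_iff' hS).2 (ae_of_all _ fun x hx => hM x hx.1 hx.2))

section

open Module

variable {E : Type*} [NormedAddCommGroup E] [NormedSpace ℝ E] [FiniteDimensional ℝ E]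
  [MeasurableSpace E] [BorelSpace E] [Nontrivial E] (μ : Measure E) [μ.IsAddHaarMeasure]

lemma integral_annulus_fun_norm {a b : ℝ} (ha : 0 ≤ a) (f : ℝ → ℝ) :
    ∫ x, (if a < ‖x‖ ∧ ‖x‖ < b then f ‖x‖ else 0) ∂μ
      = finrank ℝ E * μ.real (ball 0 1)
          * ∫ t in Ioo a b, t ^ ((finrank ℝ E : ℝ) - 1) * f t := by
  rw [integral_fun_norm_addHaar μ (fun t => if a < t ∧ t < b then f t else 0), nsmul_eq_mul,
    smul_eq_mul, mul_assoc,
    ← inter_eq_right.2 (show Ioo a b ⊆ Ioi 0 from fun t ht => ha.trans_lt ht.1),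
    ← setIntegral_indicator measurableSet_Ioo]
  congr 2
  refine setIntegral_congr_fun measurableSet_Ioi fun t (ht : 0 < t) => ?_
  have hd : 1 ≤ finrank ℝ E := finrank_pos
  by_cases h : a < t ∧ t < b
  · rw [if_pos h, indicator_of_mem (show t ∈ Ioo a b from h), smul_eq_mul,
      ← Real.rpow_natCast, Nat.cast_sub hd, Nat.cast_one]
  · rw [if_neg h, indicator_of_notMem (show t ∉ Ioo a b from h), smul_zero]

noncomputable def rieszPotential (α : ℝ) (f : E → ℝ) (x : E) : ℝ :=
  ∫ y, ‖x - y‖ ^ (α - finrank ℝ E) * f y ∂μ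

theorem mul_log_sub_le_rieszPotential_annulus {α ε r : ℝ} {x : E} (hα : 0 ≤ α)
    (hαd : α ≤ finrank ℝ E) (hε : 0 < ε) (hεr : ε < r) (hx : ‖x‖ ≤ ε / 2) :
    μ.real (ball 0 1) * Real.log (r ^ finrank ℝ E / ε ^ finrank ℝ E)
        - finrank ℝ E * (finrank ℝ E - α) * μ.real (ball 0 1) / 2
      ≤ rieszPotential μ α (fun y => if ε < ‖y‖ ∧ ‖y‖ < r then ‖y‖ ^ (-α) else 0) x := by
  set d := finrank ℝ E
  set g : ℝ → ℝ := fun t => (t + ε / 2) ^ (α - d) * t ^ (-α)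
  have hfar : ∀ y : E, ε < ‖y‖ → ε / 2 ≤ ‖x - y‖ := fun y hy => by
    linarith [norm_sub_norm_le y x, norm_sub_rev y x]
  have hint : Integrable (fun y => ‖x - y‖ ^ (α - d) *
      (if ε < ‖y‖ ∧ ‖y‖ < r then ‖y‖ ^ (-α) else 0)) μ := by
    simp only [mul_ite, mul_zero]
    refine integrable_annulus_of_norm_le (M := (ε / 2) ^ (α - d) * ε ^ (-α))
      (by fun_prop) fun y hy _ => ?_
    rw [Real.norm_of_nonneg (by positivity)]
    gcongr ?_ * ?_
    · exact Real.rpow_le_rpow_of_nonpos (by positivity) (hfar y hy) (by linarith)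
    · exact Real.rpow_le_rpow_of_nonpos hε hy.le (by linarith)
  have hle : ∀ y : E, (if ε < ‖y‖ ∧ ‖y‖ < r then g ‖y‖ else 0)
      ≤ ‖x - y‖ ^ (α - d) * (if ε < ‖y‖ ∧ ‖y‖ < r then ‖y‖ ^ (-α) else 0) := fun y => by
    split_ifs with hy
    · refine mul_le_mul_of_nonneg_right ?_ (by positivity)
      exact Real.rpow_le_rpow_of_nonpos (by linarith [hfar y hy.1])
        (by linarith [norm_sub_le x y]) (by linarith)
    · simp
  have hnonneg : ∀ y : E, 0 ≤ (if ε < ‖y‖ ∧ ‖y‖ < r then g ‖y‖ else 0) := fun y => by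
    split_ifs with hy
    · have := hε.trans hy.1; positivity
    · rfl
  calc μ.real (ball 0 1) * Real.log (r ^ d / ε ^ d) - d * (d - α) * μ.real (ball 0 1) / 2
        = d * μ.real (ball 0 1) * (Real.log (r / ε) - (d - α) / 2) := by
          rw [← div_pow, Real.log_pow]; ring
    _ ≤ d * μ.real (ball 0 1) * ∫ t in Ioo ε r, t ^ ((d : ℝ) - 1) * g t := by
          gcongr
          exact log_div_sub_le_integral_rpow_mul_add_rpow hε hεr hαd
    _ = ∫ y, (if ε < ‖y‖ ∧ ‖y‖ < r then g ‖y‖ else 0) ∂μ :=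
          (integral_annulus_fun_norm μ hε.le g).symm
    _ ≤ _ := integral_mono_of_nonneg (ae_of_all _ hnonneg) hint (ae_of_all _ hle)

end

theorem stmt_13_general (n : ℕ) (α : ℝ) (hα : 0 < α) (hαn : α < n) (r₀ : ℝ) :
    ∃ C : ℝ, ∀ ε : ℝ, 0 < ε → ε < r₀ →
      ∀ x : EuclideanSpace ℝ (Fin n), ‖x‖ ≤ ε / 2 →
        (volume (ball (0 : EuclideanSpace ℝ (Fin n)) 1)).toReal
            * Real.log (r₀ ^ n / ε ^ n) - C
          ≤ ((∫ y : EuclideanSpace ℝ (Fin n),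
                ‖x - y‖ ^ (α - (n : ℝ)) *
                  (if ε < ‖y‖ ∧ ‖y‖ < r₀ then ‖y‖ ^ (-α) else 0)) /
              ((volume (ball (0 : EuclideanSpace ℝ (Fin n)) 1)).toReal
                * Real.log (r₀ ^ n / ε ^ n)) ^ (α / n))
            ^ ((n : ℝ) / ((n : ℝ) - α)) := by
  have hn : 0 < n := by exact_mod_cast hα.trans hαn
  have hdim : Module.finrank ℝ (EuclideanSpace ℝ (Fin n)) = n := finrank_euclideanSpace_fin
  have : Nontrivial (EuclideanSpace ℝ (Fin n)) := Module.nontrivial_of_finrank_pos (hdim ▸ hn)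
  set V := (volume (ball (0 : EuclideanSpace ℝ (Fin n)) 1)).toReal
  have hV : 0 < V :=
    ENNReal.toReal_pos (measure_ball_pos volume _ one_pos).ne' measure_ball_lt_top.ne
  refine ⟨n / (n - α) * (n * (n - α) * V / 2), fun ε hε hεr x hx => ?_⟩
  have hlog : 0 < Real.log (r₀ ^ n / ε ^ n) :=
    Real.log_pos ((one_lt_div (by positivity)).2 (pow_lt_pow_left₀ hεr hε.le hn.ne'))
  have hI := mul_log_sub_le_rieszPotential_annulus volume hα.le (by rw [hdim]; exact hαn.le)
    hε hεr hx
  rw [rieszPotential, hdim] at hI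
  have hnα : 0 < (n : ℝ) - α := sub_pos.2 hαn
  refine sub_mul_le_rpow_div_rpow hα hαn (mul_pos hV hlog) (by positivity) ?_ hI
  refine integral_nonneg fun y => mul_nonneg (by positivity) ?_
  split_ifs <;> positivity

/-- With `φ_ε(y) = |y|^{−α} 𝟙_{ε<|y|<r₀}` and `φ̃_ε = φ_ε/‖φ_ε‖_{n/α}`, there is a
constant `C` independent of `ε` such that for all `|x| ≤ ε/2`:
`(I_α φ̃_ε(x))^{n/(n−α)} ≥ |B₁| log(r₀^n/ε^n) − C`. -/
theorem stmt_13 (n : ℕ) (hn : 0 < n) (α : ℝ) (hα : 0 < α) (hαn : α < n)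
    (r₀ : ℝ) (hr₀pos : 0 < r₀) (hr₀ : r₀ ≤ 1) :
    ∃ C : ℝ, ∀ ε : ℝ, 0 < ε → ε < r₀ →
      ∀ x : EuclideanSpace ℝ (Fin n), ‖x‖ ≤ ε / 2 →
        (volume (ball (0 : EuclideanSpace ℝ (Fin n)) 1)).toReal
            * Real.log (r₀ ^ n / ε ^ n) - C
          ≤ ((∫ y : EuclideanSpace ℝ (Fin n),
                ‖x - y‖ ^ (α - (n : ℝ)) *
                  (if ε < ‖y‖ ∧ ‖y‖ < r₀ then ‖y‖ ^ (-α) else 0)) /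
              ((volume (ball (0 : EuclideanSpace ℝ (Fin n)) 1)).toReal
                * Real.log (r₀ ^ n / ε ^ n)) ^ (α / n))
            ^ ((n : ℝ) / ((n : ℝ) - α)) :=
  stmt_13_general n α hα hαn r₀
end

section
/- Let k(x,y) = |y|^{α−n} if |x|/2 ≤ |y| < |x| and 0 otherwise, on ℝ^n × ℝ^n with 0 < α < n. Then for each x ≠ 0, the rearrangement of k(x,·) satisfies k₁*(x,t) ≤ |B₁|^{(n−α)/n} t^{−(n−α)/n} for all t > 0, so that sup_x ∫_1^∞ k₁*(x,t)^{n/(n−α)} dt < ∞, while the pointwise supremum k₁*(t) = |B₁|^{(n−α)/n} t^{−(n−α)/n} has ∫_1^∞ k₁*(t)^{n/(n−α)} dt = +∞. -/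
/-!
The superlevel set `{k(x,·) > s}` of the annular kernel is contained in the ball of radius
`s^{1/(α-n)}` (where `|y|^{α-n} > s`), whose volume is exactly `t` when
`s = |B₁|^{(n-α)/n} t^{-(n-α)/n}`; this gives the pointwise bound. For fixed `x ≠ 0` the kernel is
bounded by `(|x|/2)^{α-n}` and supported in the ball of radius `|x|`, so `k₁*(x,·)` is bounded by
that constant and vanishes beyond `|B₁||x|^n`; the integral is then at most `2^n |B₁|`, uniformly
in `x`. The majorant, raised to `n/(n-α)`, is `|B₁|/t`, which is not integrable at infinity.
-/

open MeasureTheory Set Metric ENNReal Module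

noncomputable section

/-- With `f = k(x,·)` on `ℝⁿ` and `μ` Lebesgue measure, this is the paper's `k₁*(x,t)`. -/
def decreasingRearrangement {X : Type*} [MeasurableSpace X] (μ : Measure X) (f : X → ℝ)
    (t : ℝ) : ℝ :=
  sInf {s : ℝ | 0 < s ∧ μ {y | s < f y} ≤ ENNReal.ofReal t}

def annularKernel {E : Type*} [Norm E] (β : ℝ) (x y : E) : ℝ :=
  if ‖x‖ / 2 ≤ ‖y‖ ∧ ‖y‖ < ‖x‖ then ‖y‖ ^ β else 0

end

section Rearrangement

variable {X : Type*} [MeasurableSpace X] (μ : Measure X) {f : X → ℝ} {t : ℝ}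

theorem decreasingRearrangement_nonneg : 0 ≤ decreasingRearrangement μ f t :=
  Real.sInf_nonneg fun _ hs => hs.1.le

theorem decreasingRearrangement_le {s : ℝ} (hs : 0 < s) (h : μ {y | s < f y} ≤ ENNReal.ofReal t) :
    decreasingRearrangement μ f t ≤ s :=
  csInf_le ⟨0, fun _ hs => hs.1.le⟩ ⟨hs, h⟩

theorem decreasingRearrangement_le_of_le {s₀ : ℝ} (hs₀ : 0 < s₀) (hf : ∀ y, f y ≤ s₀) :
    decreasingRearrangement μ f t ≤ s₀ :=
  decreasingRearrangement_le μ hs₀ <| by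
    simp only [(hf _).not_gt, ofPred_false, measure_empty, zero_le]

theorem decreasingRearrangement_eq_zero (h : μ {y | 0 < f y} ≤ ENNReal.ofReal t) :
    decreasingRearrangement μ f t = 0 := by
  have hset : {s : ℝ | 0 < s ∧ μ {y | s < f y} ≤ ENNReal.ofReal t} = Ioi 0 :=
    Set.ext fun s => ⟨And.left, fun hs =>
      ⟨hs, (measure_mono fun y (hy : s < f y) => hs.trans hy).trans h⟩⟩
  rw [decreasingRearrangement, hset, csInf_Ioi]

theorem lintegral_decreasingRearrangement_rpow_le {s₀ M p : ℝ} (hs₀ : 0 < s₀)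
    (hf : ∀ y, f y ≤ s₀) (hM : μ {y | 0 < f y} ≤ ENNReal.ofReal M) (hp : 0 < p) :
    ∫⁻ t in Ioi 0, ENNReal.ofReal (decreasingRearrangement μ f t ^ p)
      ≤ ENNReal.ofReal (s₀ ^ p * M) := by
  calc ∫⁻ t in Ioi 0, ENNReal.ofReal (decreasingRearrangement μ f t ^ p)
      ≤ ∫⁻ t in Ioi 0, (Ioc 0 M).indicator (fun _ => ENNReal.ofReal (s₀ ^ p)) t := by
        refine setLIntegral_mono (measurable_const.indicator measurableSet_Ioc) fun t ht => ?_
        by_cases htM : t ≤ M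
        · rw [indicator_of_mem (show t ∈ Ioc 0 M from ⟨ht, htM⟩)]
          exact ENNReal.ofReal_le_ofReal <| Real.rpow_le_rpow
            (decreasingRearrangement_nonneg μ) (decreasingRearrangement_le_of_le μ hs₀ hf) hp.le
        · rw [decreasingRearrangement_eq_zero μ (hM.trans (ofReal_le_ofReal (not_le.1 htM).le)),
            Real.zero_rpow hp.ne', indicator_of_notMem fun h => htM h.2, ofReal_zero]
    _ = ENNReal.ofReal (s₀ ^ p * M) := by
        rw [lintegral_indicator measurableSet_Ioc, setLIntegral_const,
          Measure.restrict_apply measurableSet_Ioc, Ioc_inter_Ioi, max_self, Real.volume_Ioc,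
          sub_zero, ← ofReal_mul (Real.rpow_nonneg hs₀.le p)]

end Rearrangement

section AnnularKernel

variable {E : Type*} [NormedAddCommGroup E] {β : ℝ}

theorem annularKernel_le_of_nonpos (hβ : β ≤ 0) (x y : E) :
    annularKernel β x y ≤ (‖x‖ / 2) ^ β := by
  unfold annularKernel
  split_ifs with h
  · exact Real.rpow_le_rpow_of_nonpos (by linarith [h.1, norm_nonneg y]) h.1 hβ
  · exact Real.rpow_nonneg (by positivity) β

theorem setOf_pos_annularKernel_subset_ball (x : E) :
    {y | 0 < annularKernel β x y} ⊆ ball 0 ‖x‖ := fun y hy => by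
  rw [mem_ofPred_eq, annularKernel] at hy
  split_ifs at hy with h
  · exact mem_ball_zero_iff.2 h.2
  · exact absurd hy (lt_irrefl 0)

theorem setOf_lt_annularKernel_subset_ball (hβ : β < 0) {s : ℝ} (hs : 0 < s) (x : E) :
    {y | s < annularKernel β x y} ⊆ ball 0 (s ^ β⁻¹) := fun y hy => by
  rw [mem_ofPred_eq, annularKernel] at hy
  split_ifs at hy with h
  · have hy0 : 0 < ‖y‖ := by linarith [h.1, h.2]
    exact mem_ball_zero_iff.2 ((Real.lt_rpow_inv_iff_of_neg hy0 hs hβ).2 hy)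
  · exact absurd (hs.trans hy) (lt_irrefl 0)

end AnnularKernel

theorem rpow_mul_rpow_neg_rpow_inv {c t e : ℝ} (hc : 0 ≤ c) (ht : 0 ≤ t) (he : e ≠ 0) :
    (c ^ e * t ^ (-e)) ^ e⁻¹ = c * t⁻¹ := by
  rw [Real.mul_rpow (Real.rpow_nonneg hc _) (Real.rpow_nonneg ht _), ← Real.rpow_mul hc,
    ← Real.rpow_mul ht, mul_inv_cancel₀ he, neg_mul, mul_inv_cancel₀ he, Real.rpow_one,
    Real.rpow_neg_one]

theorem lintegral_Ioi_one_ofReal_const_mul_inv_eq_top {c : ℝ} (hc : 0 < c) :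
    ∫⁻ t in Ioi (1 : ℝ), ENNReal.ofReal (c * t⁻¹) = ⊤ := by
  by_contra hfin
  have hnonneg : 0 ≤ᵐ[volume.restrict (Ioi (1 : ℝ))] fun t => c * t⁻¹ :=
    (ae_restrict_mem measurableSet_Ioi).mono fun t (ht : 1 < t) => by
      have : 0 < t := zero_lt_one.trans ht
      positivity
  have hint : IntegrableOn (fun t : ℝ => c * t⁻¹) (Ioi 1) :=
    ⟨by fun_prop, (hasFiniteIntegral_iff_ofReal hnonneg).2 (lt_top_iff_ne_top.2 hfin)⟩
  have hinv := hint.const_mul c⁻¹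
  simp only [← mul_assoc, inv_mul_cancel₀ hc.ne', one_mul] at hinv
  exact not_integrableOn_Ioi_inv hinv

theorem lintegral_Ioi_one_rpow_mul_rpow_neg_rpow_inv_eq_top {c e : ℝ} (hc : 0 < c)
    (he : e ≠ 0) : ∫⁻ t in Ioi (1 : ℝ), ENNReal.ofReal ((c ^ e * t ^ (-e)) ^ e⁻¹) = ⊤ := by
  rw [setLIntegral_congr_fun measurableSet_Ioi fun t (ht : 1 < t) => by
    rw [rpow_mul_rpow_neg_rpow_inv hc.le (zero_lt_one.trans ht).le he]]
  exact lintegral_Ioi_one_ofReal_const_mul_inv_eq_top hc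

section HaarMeasure

variable {E : Type*} [NormedAddCommGroup E] [NormedSpace ℝ E] [MeasurableSpace E]
  [FiniteDimensional ℝ E] (μ : Measure E) [μ.IsAddHaarMeasure] {n : ℕ} {α : ℝ}

theorem toReal_measure_unit_ball_pos : 0 < (μ (ball (0 : E) 1)).toReal :=
  toReal_pos (measure_ball_pos μ _ one_pos).ne' measure_ball_lt_top.ne

variable [BorelSpace E]

theorem measure_ball_zero_eq_ofReal {r : ℝ} (hr : 0 < r) :
    μ (ball (0 : E) r) = ENNReal.ofReal (r ^ finrank ℝ E * (μ (ball (0 : E) 1)).toReal) := by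
  rw [Measure.addHaar_ball_of_pos μ _ hr, ofReal_mul (pow_nonneg hr.le _),
    ofReal_toReal measure_ball_lt_top.ne]

theorem decreasingRearrangement_annularKernel_le (hE : finrank ℝ E = n) (hn : 0 < n)
    (hαn : α < n) (x : E) {t : ℝ} (ht : 0 < t) :
    decreasingRearrangement μ (annularKernel (α - n) x) t
      ≤ (μ (ball (0 : E) 1)).toReal ^ (((n : ℝ) - α) / n) * t ^ (-(((n : ℝ) - α) / n)) := by
  set c := (μ (ball (0 : E) 1)).toReal
  set e := ((n : ℝ) - α) / n
  have hc : 0 < c := toReal_measure_unit_ball_pos μ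
  have hs : 0 < c ^ e * t ^ (-e) := by positivity
  have hβ : α - n < 0 := by linarith
  have hexp : (α - n)⁻¹ * n = -e⁻¹ := by
    rw [inv_div]
    field_simp [hβ.ne, (sub_pos.2 hαn).ne']
    ring
  have hradius : ((c ^ e * t ^ (-e)) ^ (α - n)⁻¹) ^ n * c = t := by
    have he : e ≠ 0 := (div_pos (by linarith) (by exact_mod_cast hn)).ne'
    rw [← Real.rpow_natCast, ← Real.rpow_mul hs.le, hexp, Real.rpow_neg hs.le,
      rpow_mul_rpow_neg_rpow_inv hc.le ht.le he]
    field_simp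
  refine decreasingRearrangement_le μ hs ?_
  calc μ {y | c ^ e * t ^ (-e) < annularKernel (α - n) x y}
      ≤ μ (ball 0 ((c ^ e * t ^ (-e)) ^ (α - n)⁻¹)) :=
        measure_mono (setOf_lt_annularKernel_subset_ball hβ hs x)
    _ = ENNReal.ofReal t := by
        rw [measure_ball_zero_eq_ofReal μ (Real.rpow_pos_of_pos hs _), hE, hradius]

theorem lintegral_decreasingRearrangement_annularKernel_rpow_le (hE : finrank ℝ E = n)
    (hn : 0 < n) (hαn : α < n) {x : E} (hx : x ≠ 0) :
    ∫⁻ t in Ioi 0,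
        ENNReal.ofReal (decreasingRearrangement μ (annularKernel (α - n) x) t ^ ((n : ℝ) / (n - α)))
      ≤ ENNReal.ofReal (2 ^ n * (μ (ball (0 : E) 1)).toReal) := by
  have hx₀ : 0 < ‖x‖ := norm_pos_iff.2 hx
  have hsupp : μ {y | 0 < annularKernel (α - n) x y}
      ≤ ENNReal.ofReal (‖x‖ ^ n * (μ (ball (0 : E) 1)).toReal) := by
    rw [← hE, ← measure_ball_zero_eq_ofReal μ hx₀]
    exact measure_mono (setOf_pos_annularKernel_subset_ball x)
  have hp : 0 < (n : ℝ) / (n - α) := div_pos (by exact_mod_cast hn) (by linarith)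
  have hexp : (α - n) * (n / (n - α)) = -(n : ℝ) := by
    field_simp [(sub_pos.2 hαn).ne']
    ring
  refine (lintegral_decreasingRearrangement_rpow_le μ (by positivity)
    (annularKernel_le_of_nonpos (by linarith) x) hsupp hp).trans_eq ?_
  congr 1
  rw [← Real.rpow_mul (by positivity), hexp, Real.rpow_neg (by positivity), Real.rpow_natCast,
    div_pow]
  field_simp

end HaarMeasure

theorem stmt_16_general (n : ℕ) (hn : 0 < n) (α : ℝ) (hαn : α < n) :
    (∀ x : EuclideanSpace ℝ (Fin n), x ≠ 0 → ∀ t : ℝ, 0 < t →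
      sInf {s : ℝ | 0 < s ∧
          volume {y : EuclideanSpace ℝ (Fin n) |
              s < if ‖x‖ / 2 ≤ ‖y‖ ∧ ‖y‖ < ‖x‖ then ‖y‖ ^ (α - (n : ℝ)) else 0}
            ≤ ENNReal.ofReal t}
        ≤ (volume (ball (0 : EuclideanSpace ℝ (Fin n)) 1)).toReal ^ (((n : ℝ) - α) / n)
            * t ^ (-(((n : ℝ) - α) / n))) ∧
    (∃ C : ℝ≥0∞, C < ⊤ ∧ ∀ x : EuclideanSpace ℝ (Fin n), x ≠ 0 →
      (∫⁻ t in Ioi (1 : ℝ), ENNReal.ofReal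
          ((sInf {s : ℝ | 0 < s ∧
              volume {y : EuclideanSpace ℝ (Fin n) |
                  s < if ‖x‖ / 2 ≤ ‖y‖ ∧ ‖y‖ < ‖x‖ then ‖y‖ ^ (α - (n : ℝ)) else 0}
                ≤ ENNReal.ofReal t}) ^ ((n : ℝ) / ((n : ℝ) - α))))
        ≤ C) ∧
    (∫⁻ t in Ioi (1 : ℝ), ENNReal.ofReal
        (((volume (ball (0 : EuclideanSpace ℝ (Fin n)) 1)).toReal ^ (((n : ℝ) - α) / n)
            * t ^ (-(((n : ℝ) - α) / n))) ^ ((n : ℝ) / ((n : ℝ) - α))))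
      = ⊤ := by
  have hE : finrank ℝ (EuclideanSpace ℝ (Fin n)) = n := finrank_euclideanSpace_fin
  refine ⟨fun x _ t ht => decreasingRearrangement_annularKernel_le volume hE hn hαn x ht,
    ⟨_, ofReal_lt_top, fun x hx => (lintegral_mono_set (Ioi_subset_Ioi zero_le_one)).trans
      (lintegral_decreasingRearrangement_annularKernel_rpow_le volume hE hn hαn hx)⟩, ?_⟩
  have he : ((n : ℝ) - α) / n ≠ 0 := (div_pos (by linarith) (by exact_mod_cast hn)).ne'
  rw [← inv_div ((n : ℝ) - α) n]
  exact lintegral_Ioi_one_rpow_mul_rpow_neg_rpow_inv_eq_top (toReal_measure_unit_ball_pos _) he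

/-- For the kernel `k(x,y) = |y|^{α−n} 𝟙_{|x|/2 ≤ |y| < |x|}` on `ℝ^n`:
(i) for each `x ≠ 0`, `k₁*(x,t) ≤ |B₁|^{(n−α)/n} t^{−(n−α)/n}`;
(ii) hence `sup_x ∫_1^∞ k₁*(x,t)^{n/(n−α)} dt < ∞`;
(iii) yet `∫_1^∞ (|B₁|^{(n−α)/n} t^{−(n−α)/n})^{n/(n−α)} dt = ∞` for the pointwise
supremum `k₁*(t) = |B₁|^{(n−α)/n} t^{−(n−α)/n}`. -/
theorem stmt_16 (n : ℕ) (hn : 0 < n) (α : ℝ) (hα : 0 < α) (hαn : α < n) :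
    (∀ x : EuclideanSpace ℝ (Fin n), x ≠ 0 → ∀ t : ℝ, 0 < t →
      sInf {s : ℝ | 0 < s ∧
          volume {y : EuclideanSpace ℝ (Fin n) |
              s < if ‖x‖ / 2 ≤ ‖y‖ ∧ ‖y‖ < ‖x‖ then ‖y‖ ^ (α - (n : ℝ)) else 0}
            ≤ ENNReal.ofReal t}
        ≤ (volume (ball (0 : EuclideanSpace ℝ (Fin n)) 1)).toReal ^ (((n : ℝ) - α) / n)
            * t ^ (-(((n : ℝ) - α) / n))) ∧
    (∃ C : ℝ≥0∞, C < ⊤ ∧ ∀ x : EuclideanSpace ℝ (Fin n), x ≠ 0 →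
      (∫⁻ t in Ioi (1 : ℝ), ENNReal.ofReal
          ((sInf {s : ℝ | 0 < s ∧
              volume {y : EuclideanSpace ℝ (Fin n) |
                  s < if ‖x‖ / 2 ≤ ‖y‖ ∧ ‖y‖ < ‖x‖ then ‖y‖ ^ (α - (n : ℝ)) else 0}
                ≤ ENNReal.ofReal t}) ^ ((n : ℝ) / ((n : ℝ) - α))))
        ≤ C) ∧
    (∫⁻ t in Ioi (1 : ℝ), ENNReal.ofReal
        (((volume (ball (0 : EuclideanSpace ℝ (Fin n)) 1)).toReal ^ (((n : ℝ) - α) / n)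
            * t ^ (-(((n : ℝ) - α) / n))) ^ ((n : ℝ) / ((n : ℝ) - α))))
      = ⊤ :=
  stmt_16_general n hn α hαn
end

section
/- Let h : [0,∞) → [0,∞) be smooth, h(0) = 0, strictly increasing to +∞, with h(x+1) − h(x) increasing. Let Ω = ⋃_{m ∈ ℤ₊^n} B(C_m, δ₀) with C_m = (h(m₁),…,h(m_n)) and δ₀ > 0 chosen so that the balls B(C_m, 10δ₀) are pairwise disjoint. Then there exist c₁, c₂, r₀ > 0 such that c₁ (h^{−1}(r/√n))^n ≤ Λ_Ω(0,r) ≤ c₂ (h^{−1}(r+1))^n for all r > r₀, where Λ_Ω(x,r) = |Ω ∩ B(x,r)|. -/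
open MeasureTheory Set Metric ENNReal

set_option maxHeartbeats 1000000

lemma aux_norm_le {n : ℕ} (x : EuclideanSpace ℝ (Fin n)) (M : ℝ) (hM : 0 ≤ M)
    (hx : ∀ i, |x i| ≤ M) : ‖x‖ ≤ Real.sqrt n * M := by
  rw [EuclideanSpace.norm_eq]
  have hsum : ∑ i : Fin n, ‖x i‖ ^ 2 ≤ (n : ℝ) * M ^ 2 := by
    calc ∑ i : Fin n, ‖x i‖ ^ 2 ≤ ∑ _i : Fin n, M ^ 2 := by
          apply Finset.sum_le_sum
          intro i _
          have := hx i
          rw [Real.norm_eq_abs]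
          nlinarith [abs_nonneg (x i)]
      _ = (n : ℝ) * M ^ 2 := by simp [mul_comm]
  calc √(∑ i : Fin n, ‖x i‖ ^ 2) ≤ √((n:ℝ) * M ^ 2) := Real.sqrt_le_sqrt hsum
    _ = Real.sqrt n * M := by
        rw [Real.sqrt_mul (by positivity), Real.sqrt_sq hM]

lemma aux_coord_le {n : ℕ} (x : EuclideanSpace ℝ (Fin n)) (i : Fin n) : |x i| ≤ ‖x‖ := by
  rw [EuclideanSpace.norm_eq]
  have h1 : |x i| = √(‖x i‖ ^ 2) := by
    rw [Real.sqrt_sq_eq_abs, Real.norm_eq_abs, abs_abs]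
  rw [h1]
  apply Real.sqrt_le_sqrt
  exact Finset.single_le_sum (f := fun j => ‖x j‖ ^ 2) (fun j _ => by positivity)
    (Finset.mem_univ i)

lemma aux_step (h : ℝ → ℝ) (h0 : h 0 = 0)
    (hdiff : MonotoneOn (fun x => h (x + 1) - h x) (Ici 0)) :
    ∀ (j : ℕ) (a : ℝ), 0 ≤ a → h a + j * h 1 ≤ h (a + j) := by
  intro j
  induction j with
  | zero => intro a _; simp
  | succ j ih =>
    intro a ha
    have h1 : h 1 - h 0 ≤ h (a + j + 1) - h (a + j) := by
      have := hdiff (show (0:ℝ) ∈ Ici 0 by simp)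
        (show a + (j:ℝ) ∈ Ici 0 from mem_Ici.mpr (by positivity)) (by positivity)
      simpa using this
    have h2 := ih a ha
    push_cast
    rw [h0] at h1
    have he : a + ((j:ℝ) + 1) = (a + j) + 1 := by ring
    rw [he]
    linarith

/-- For `h : [0,∞) → [0,∞)` smooth, `h(0)=0`, strictly increasing to `+∞` with
`h(x+1) − h(x)` increasing, and `Ω = ⋃_{m ∈ ℤ₊^n} B(C_m, δ₀)` with
`C_m = (h(m₁),…,h(m_n))` and the balls `B(C_m,10δ₀)` pairwise disjoint, there are
`c₁, c₂, r₀ > 0` with `c₁ (h⁻¹(r/√n))^n ≤ Λ_Ω(0,r) ≤ c₂ (h⁻¹(r+1))^n` for `r > r₀`. -/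
theorem stmt_17 (n : ℕ) (hn : 0 < n) (h : ℝ → ℝ) (δ₀ : ℝ) (hδ₀ : 0 < δ₀)
    (hsmooth : ContDiff ℝ (⊤ : ℕ∞) h) (h0 : h 0 = 0)
    (hmono : StrictMonoOn h (Ici 0))
    (hnonneg : ∀ x ∈ Ici (0 : ℝ), 0 ≤ h x)
    (htop : Filter.Tendsto h Filter.atTop Filter.atTop)
    (hdiff : MonotoneOn (fun x => h (x + 1) - h x) (Ici 0))
    (hdisj : ∀ m m' : Fin n → ℕ, m ≠ m' →
      Disjoint
        (ball ((WithLp.equiv 2 (Fin n → ℝ)).symm fun i => h (m i)) (10 * δ₀))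
        (ball ((WithLp.equiv 2 (Fin n → ℝ)).symm fun i => h (m' i)) (10 * δ₀))) :
    ∃ c₁ c₂ r₀ : ℝ, 0 < c₁ ∧ 0 < c₂ ∧ 0 < r₀ ∧
      ∀ r : ℝ, r₀ < r → ∀ s t : ℝ, 0 ≤ s → 0 ≤ t →
        h s = r / Real.sqrt n → h t = r + 1 →
        c₁ * s ^ n ≤
            (volume ((⋃ m : Fin n → ℕ,
                ball ((WithLp.equiv 2 (Fin n → ℝ)).symm fun i => h (m i)) δ₀)
              ∩ ball (0 : EuclideanSpace ℝ (Fin n)) r)).toReal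
          ∧ (volume ((⋃ m : Fin n → ℕ,
                ball ((WithLp.equiv 2 (Fin n → ℝ)).symm fun i => h (m i)) δ₀)
              ∩ ball (0 : EuclideanSpace ℝ (Fin n)) r)).toReal ≤ c₂ * t ^ n := by
  classical
  set C : (Fin n → ℕ) → EuclideanSpace ℝ (Fin n) :=
    fun m => (WithLp.equiv 2 (Fin n → ℝ)).symm fun i => h (m i) with hC
  have hCi : ∀ (m : Fin n → ℕ) (i : Fin n), C m i = h (m i) := by
    intro m i; rfl
  have h1pos : 0 < h 1 := by
    have := hmono (show (0:ℝ) ∈ Ici 0 by simp) (show (1:ℝ) ∈ Ici 0 by norm_num)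
      (by norm_num)
    rw [h0] at this; exact this
  -- choose K with δ₀ ≤ K * h 1 and 1 ≤ K
  obtain ⟨k0, hk0⟩ := exists_nat_ge (δ₀ / h 1)
  set K : ℕ := k0 + 1 with hK
  have hKδ : δ₀ ≤ K * h 1 := by
    have h1 : δ₀ ≤ k0 * h 1 := by
      rw [div_le_iff₀ h1pos] at hk0; linarith
    have : (k0 : ℝ) * h 1 ≤ K * h 1 := by
      apply mul_le_mul_of_nonneg_right _ h1pos.le
      rw [hK]; push_cast; linarith
    linarith
  have hsn1 : 1 ≤ Real.sqrt n := by
    rw [show (1:ℝ) = Real.sqrt 1 by simp]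
    apply Real.sqrt_le_sqrt
    exact_mod_cast hn
  have hsnpos : 0 < Real.sqrt n := lt_of_lt_of_le one_pos hsn1
  set v : ℝ≥0∞ := volume (ball (0 : EuclideanSpace ℝ (Fin n)) δ₀) with hv
  have hv0 : 0 < v := measure_ball_pos volume 0 hδ₀
  have hvtop : v ≠ ⊤ := measure_ball_lt_top.ne
  have hvr : 0 < v.toReal := ENNReal.toReal_pos hv0.ne' hvtop
  have h2K0 : 0 ≤ h (2 * K) := hnonneg _ (mem_Ici.mpr (by positivity))
  refine ⟨v.toReal / 2 ^ n, v.toReal * (K + 2) ^ n,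
    1 + h 1 + Real.sqrt n * h (2 * K), by positivity, by positivity, by positivity, ?_⟩
  intro r hr s t hs ht hhs hht
  have hrpos : 0 < r := by nlinarith [Real.sqrt_nonneg (n:ℝ)]
  -- s > 2K
  have hs2K : 2 * (K : ℝ) < s := by
    by_contra hcon
    push_neg at hcon
    have h1 : h s ≤ h (2 * (K:ℝ)) :=
      hmono.monotoneOn hs (mem_Ici.mpr (by positivity)) hcon
    have h2 : h (2 * (K:ℝ)) < h s := by
      rw [hhs, lt_div_iff₀ hsnpos]
      nlinarith
    linarith
  -- t > 1
  have ht1 : 1 < t := by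
    by_contra hcon
    push_neg at hcon
    have h1 : h t ≤ h 1 := hmono.monotoneOn ht (by norm_num) hcon
    rw [hht] at h1
    nlinarith [Real.sqrt_nonneg (n:ℝ)]
  have hK0 : (0:ℝ) ≤ K := by positivity
  -- ball measurability / translation invariance
  have hball_vol : ∀ m : Fin n → ℕ, volume (ball (C m) δ₀) = v := by
    intro m
    exact Measure.addHaar_ball_center volume (C m) δ₀
  have hdisj' : ∀ m m' : Fin n → ℕ, m ≠ m' →
      Disjoint (ball (C m) δ₀) (ball (C m') δ₀) := by
    intro m m' hmm
    exact (hdisj m m' hmm).mono (ball_subset_ball (by linarith))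
      (ball_subset_ball (by linarith))
  constructor
  · -- LOWER BOUND
    set N : ℕ := ⌊s⌋₊ - K with hNdef
    have hKfloor : K ≤ ⌊s⌋₊ := Nat.le_floor (by linarith)
    have hNcast : (N : ℝ) = (⌊s⌋₊ : ℝ) - K := by
      rw [hNdef, Nat.cast_sub hKfloor]
    have hN1 : s - K ≤ (N : ℝ) + 1 := by
      have := Nat.lt_floor_add_one s
      rw [hNcast]; linarith
    have hNle : (N : ℝ) ≤ s - K := by
      have := Nat.floor_le hs
      rw [hNcast]; linarith
    have hsK0 : (0:ℝ) ≤ s - K := by linarith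
    have hstep := aux_step h h0 hdiff K (s - K) hsK0
    rw [show s - K + (K:ℝ) = s by ring] at hstep
    have hsδ : h (s - K) + δ₀ ≤ h s := by linarith
    have hkey : ∀ m : Fin n → ℕ, (∀ i, m i ≤ N) →
        ball (C m) δ₀ ⊆ ball (0 : EuclideanSpace ℝ (Fin n)) r := by
      intro m hm x hx
      have hval : ∀ i, |h (m i)| ≤ h s - δ₀ := by
        intro i
        have h1 : (0:ℝ) ≤ h (m i) := hnonneg _ (by simp)
        have h2 : h (m i) ≤ h (s - K) := by
          rcases eq_or_lt_of_le (show (m i : ℝ) ≤ s - K by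
            calc (m i : ℝ) ≤ N := by exact_mod_cast hm i
              _ ≤ s - K := hNle) with heq | hlt
          · rw [heq]
          · exact (hmono (by simp) (by simpa using hsK0) hlt).le
        rw [abs_of_nonneg h1]; linarith
      have hMnn : (0:ℝ) ≤ h s - δ₀ := by
        have := hnonneg (s - K) (by simpa using hsK0)
        linarith
      have hnorm : ‖C m‖ ≤ r - δ₀ := by
        have h3 := aux_norm_le (C m) (h s - δ₀) hMnn (fun i => by rw [hCi]; exact hval i)
        have h4 : Real.sqrt n * h s = r := by
          rw [hhs]; field_simp
        nlinarith
      have hd : dist x (C m) < δ₀ := mem_ball.mp hx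
      rw [mem_ball]
      calc dist x 0 ≤ dist x (C m) + dist (C m) 0 := dist_triangle _ _ _
        _ < δ₀ + (r - δ₀) := by
            rw [dist_zero_right]
            exact add_lt_add_of_lt_of_le hd hnorm
        _ = r := by ring
    set M : Finset (Fin n → ℕ) := Fintype.piFinset (fun _ : Fin n => Finset.range (N + 1))
      with hMdef
    have hMcard : M.card = (N + 1) ^ n := by
      rw [hMdef, Fintype.card_piFinset]
      simp
    have hMvol : volume (⋃ m ∈ M, ball (C m) δ₀) = (M.card : ℝ≥0∞) * v := by
      rw [measure_biUnion_finset]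
      · rw [Finset.sum_congr rfl (fun m _ => hball_vol m), Finset.sum_const, nsmul_eq_mul]
      · intro a _ b _ hab
        exact hdisj' a b hab
      · intro b _
        exact measurableSet_ball
    have hsubset : (⋃ m ∈ M, ball (C m) δ₀) ⊆
        (⋃ m : Fin n → ℕ, ball (C m) δ₀) ∩ ball (0 : EuclideanSpace ℝ (Fin n)) r := by
      apply iUnion₂_subset
      intro m hm
      refine subset_inter (subset_iUnion (fun m' => ball (C m') δ₀) m) (hkey m ?_)
      intro i
      have := Fintype.mem_piFinset.mp hm i
      rw [Finset.mem_range] at this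
      omega
    have hle : ((N + 1 : ℕ) : ℝ≥0∞) ^ n * v ≤
        volume ((⋃ m : Fin n → ℕ, ball (C m) δ₀) ∩
          ball (0 : EuclideanSpace ℝ (Fin n)) r) := by
      calc ((N + 1 : ℕ) : ℝ≥0∞) ^ n * v = (M.card : ℝ≥0∞) * v := by
            rw [hMcard]; push_cast; ring
        _ = volume (⋃ m ∈ M, ball (C m) δ₀) := hMvol.symm
        _ ≤ _ := measure_mono hsubset
    have hTtop : volume ((⋃ m : Fin n → ℕ, ball (C m) δ₀) ∩
        ball (0 : EuclideanSpace ℝ (Fin n)) r) ≠ ⊤ :=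
      (lt_of_le_of_lt (measure_mono inter_subset_right) measure_ball_lt_top).ne
    have hreal := ENNReal.toReal_mono hTtop hle
    rw [ENNReal.toReal_mul, ENNReal.toReal_pow, ENNReal.toReal_natCast] at hreal
    have hfin : v.toReal / 2 ^ n * s ^ n ≤ ((N + 1 : ℕ) : ℝ) ^ n * v.toReal := by
      have hhalf : s / 2 ≤ ((N + 1 : ℕ) : ℝ) := by push_cast; linarith
      have hsp : (0:ℝ) ≤ s / 2 := by linarith
      have := pow_le_pow_left₀ hsp hhalf n
      calc v.toReal / 2 ^ n * s ^ n = (s / 2) ^ n * v.toReal := by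
            rw [div_pow]; ring
        _ ≤ ((N + 1 : ℕ) : ℝ) ^ n * v.toReal := by
            apply mul_le_mul_of_nonneg_right this hvr.le
    linarith
  · -- UPPER BOUND
    have hstep := aux_step h h0 hdiff K t ht
    rw [hht] at hstep
    set N' : ℕ := ⌊t⌋₊ + K with hN'def
    set M' : Finset (Fin n → ℕ) := Fintype.piFinset (fun _ : Fin n => Finset.range (N' + 1))
      with hM'def
    have hsub : (⋃ m : Fin n → ℕ, ball (C m) δ₀) ∩
        ball (0 : EuclideanSpace ℝ (Fin n)) r ⊆ ⋃ m ∈ M', ball (C m) δ₀ := by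
      rintro x ⟨hxΩ, hxB⟩
      rw [mem_iUnion] at hxΩ
      obtain ⟨m, hxm⟩ := hxΩ
      have hmem : m ∈ M' := by
        rw [hM'def, Fintype.mem_piFinset]
        intro i
        rw [Finset.mem_range]
        have hnx : ‖x‖ < r := by rwa [mem_ball, dist_zero_right] at hxB
        have hdx : dist (C m) x < δ₀ := by
          rw [dist_comm]; exact mem_ball.mp hxm
        have hnc : ‖C m‖ < r + δ₀ := by
          rw [← dist_zero_right]
          calc dist (C m) 0 ≤ dist (C m) x + dist x 0 := dist_triangle _ _ _
            _ < δ₀ + r := by rw [dist_zero_right]; exact add_lt_add hdx hnx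
            _ = r + δ₀ := by ring
        have hhm : h (m i) < h (t + K) := by
          have h1 : h (m i) ≤ |C m i| := by rw [hCi]; exact le_abs_self _
          have h2 := aux_coord_le (C m) i
          have h3 : h (m i) < r + δ₀ := lt_of_le_of_lt (le_trans h1 h2) hnc
          have h4 : r + 1 + K * h 1 ≤ h (t + K) := hstep
          nlinarith
        have hmt : (m i : ℝ) ≤ t + K := by
          by_contra hcon
          push_neg at hcon
          have := hmono (show t + (K:ℝ) ∈ Ici 0 from mem_Ici.mpr (by positivity))
            (show ((m i : ℕ) : ℝ) ∈ Ici 0 by simp) hcon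
          linarith
        have : m i ≤ ⌊t + (K:ℝ)⌋₊ := Nat.le_floor hmt
        rw [Nat.floor_add_natCast ht K] at this
        omega
      exact mem_biUnion hmem hxm
    have hle : volume ((⋃ m : Fin n → ℕ, ball (C m) δ₀) ∩
        ball (0 : EuclideanSpace ℝ (Fin n)) r) ≤ ((N' + 1 : ℕ) : ℝ≥0∞) ^ n * v := by
      calc volume ((⋃ m : Fin n → ℕ, ball (C m) δ₀) ∩
          ball (0 : EuclideanSpace ℝ (Fin n)) r)
          ≤ volume (⋃ m ∈ M', ball (C m) δ₀) := measure_mono hsub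
        _ ≤ ∑ m ∈ M', volume (ball (C m) δ₀) := measure_biUnion_finset_le M' _
        _ = (M'.card : ℝ≥0∞) * v := by
            rw [Finset.sum_congr rfl (fun m _ => hball_vol m), Finset.sum_const, nsmul_eq_mul]
        _ = ((N' + 1 : ℕ) : ℝ≥0∞) ^ n * v := by
            rw [hM'def, Fintype.card_piFinset]
            simp
    have hrhs_top : ((N' + 1 : ℕ) : ℝ≥0∞) ^ n * v ≠ ⊤ := by
      apply ENNReal.mul_ne_top _ hvtop
      exact (ENNReal.pow_ne_top (ENNReal.natCast_ne_top _))
    have hreal := ENNReal.toReal_mono hrhs_top hle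
    rw [ENNReal.toReal_mul, ENNReal.toReal_pow, ENNReal.toReal_natCast] at hreal
    have hN't : ((N' + 1 : ℕ) : ℝ) ≤ (K + 2) * t := by
      have h1 : ((⌊t⌋₊ : ℕ) : ℝ) ≤ t := Nat.floor_le ht
      rw [hN'def]
      push_cast
      nlinarith
    have hfin : ((N' + 1 : ℕ) : ℝ) ^ n * v.toReal ≤ v.toReal * ((K:ℝ) + 2) ^ n * t ^ n := by
      have hnn : (0:ℝ) ≤ ((N' + 1 : ℕ) : ℝ) := by positivity
      have := pow_le_pow_left₀ hnn hN't n
      rw [mul_pow] at this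
      calc ((N' + 1 : ℕ) : ℝ) ^ n * v.toReal
          ≤ ((K:ℝ) + 2) ^ n * t ^ n * v.toReal :=
            mul_le_mul_of_nonneg_right this hvr.le
        _ = v.toReal * ((K:ℝ) + 2) ^ n * t ^ n := by ring
    push_cast at hreal hfin ⊢
    linarith
end
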